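/- arXiv:2011.01395 — 6 statements merged into one kernel-verified Lean document; each statement's English description precedes it below -/
import Mathlib

section
/- In a cardinal algebra, if a = a + b, then a = a + ∞b, where ∞b denotes the countably infinite sum of copies of b. -/
open MeasureTheory Set Pointwise

/-- A countable Borel equivalence relation (CBER) on a measurable space `X`:
an equivalence relation that is Borel as a subset of `X × X` and has countable classes. -/
structure CBER (X : Type) [MeasurableSpace X] : Type where
  rel : X → X → Prop
  iseqv : Equivalence rel
  meas : MeasurableSet {p : X × X | rel p.1 p.2}
  ctble : ∀ x : X, {y : X | rel x y}.Countable

namespace CBER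

variable {X : Type} [MeasurableSpace X]

/-- `E` is a subequivalence relation of `F`. -/
def le (E F : CBER X) : Prop := ∀ x y, E.rel x y → F.rel x y

/-- The setoid associated to a CBER. -/
def setoid (E : CBER X) : Setoid X := ⟨E.rel, E.iseqv⟩

/-- The restriction of a CBER to a subset. -/
def restrict (E : CBER X) (Y : Set X) : CBER Y where
  rel x y := E.rel x y
  iseqv := ⟨fun x => E.iseqv.refl x, fun h => E.iseqv.symm h,
    fun h h' => E.iseqv.trans h h'⟩
  meas := by
    have hm : Measurable fun p : Y × Y => ((p.1 : X), (p.2 : X)) :=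
      (measurable_subtype_coe.comp measurable_fst).prodMk
        (measurable_subtype_coe.comp measurable_snd)
    exact hm E.meas
  ctble x := (E.ctble x).preimage Subtype.val_injective

/-- The product `E × I_N` of `E` with the complete relation on a countable set `N`. -/
def prodFull (E : CBER X) (N : Type) [MeasurableSpace N] [Countable N] :
    CBER (X × N) where
  rel p q := E.rel p.1 q.1
  iseqv := ⟨fun _ => E.iseqv.refl _, fun h => E.iseqv.symm h,
    fun h h' => E.iseqv.trans h h'⟩
  meas := by
    have hm : Measurable fun p : (X × N) × (X × N) => (p.1.1, p.2.1) :=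
      (measurable_fst.comp measurable_fst).prodMk (measurable_fst.comp measurable_snd)
    exact hm E.meas
  ctble p := by
    have hsub : {q : X × N | E.rel p.1 q.1} ⊆ {y | E.rel p.1 y} ×ˢ (Set.univ : Set N) :=
      fun q hq => ⟨hq, trivial⟩
    exact Set.Countable.mono hsub ((E.ctble p.1).prod Set.countable_univ)

/-- A CBER is compressible if there is a Borel injection sending every class
to a proper subset of itself. -/
def Compressible (E : CBER X) : Prop :=
  ∃ T : X → X, Measurable T ∧ Function.Injective T ∧ (∀ x, E.rel (T x) x) ∧
    ∀ x, ∃ y, E.rel x y ∧ ∀ z, E.rel x z → T z ≠ y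

/-- A CBER is smooth if it admits a Borel transversal. -/
def Smooth (E : CBER X) : Prop :=
  ∃ S : Set X, MeasurableSet S ∧ ∀ x, ∃! y, y ∈ S ∧ E.rel x y

/-- A CBER is aperiodic if every class is infinite. -/
def Aperiodic (E : CBER X) : Prop := ∀ x, {y : X | E.rel x y}.Infinite

end CBER

section Defs

variable {X : Type} [MeasurableSpace X]

/-- A Borel automorphism of the CBER `E`. -/
def IsAut (E : CBER X) (T : X ≃ X) : Prop :=
  Measurable T ∧ Measurable T.symm ∧ ∀ x y, E.rel (T x) (T y) ↔ E.rel x y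

/-- `L` is an `(E,F)`-link: `L ⊆ F` and within each `F`-class, every `E`-class meets
every `L`-class in exactly one point. -/
def IsLink (E : CBER X) (F : X → X → Prop) (L : CBER X) : Prop :=
  (∀ x y, L.rel x y → F x y) ∧ ∀ x y, F x y → ∃! z, E.rel x z ∧ L.rel y z

/-- `E` is normal in `F`: there is a countable family of Borel automorphisms of `E`
(generating a countable subgroup of `Aut_B(E)`) such that `F = E^{∨G}`, i.e. `F` is the
equivalence relation generated by `E` together with the graphs of these automorphisms. -/
def NormalIn (E F : CBER X) : Prop :=
  ∃ T : ℕ → X ≃ X, (∀ n, IsAut E (T n)) ∧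
    ∀ x y, F.rel x y ↔
      Relation.EqvGen (fun u v => E.rel u v ∨ ∃ n, T n u = v) x y

/-- An outer action of `G` on `X/E`: a homomorphism `G → Out_B(E)`, presented by a
choice of Borel automorphism `T g` of `E` for each `g`, multiplicative modulo `Inn_B(E)`. -/
structure OuterAction (E : CBER X) (G : Type) [Group G] where
  T : G → X ≃ X
  aut : ∀ g, IsAut E (T g)
  one : ∀ x, E.rel (T 1 x) x
  mul : ∀ g h x, E.rel (T (g * h) x) (T g (T h x))

/-- A lift of an outer action: a homomorphism `G → Aut_B(E)` which composed with
the projection `Aut_B(E) → Out_B(E)` gives the outer action. -/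
structure OuterLift {G : Type} [Group G] {E : CBER X} (a : OuterAction E G) where
  b : G → X ≃ X
  aut : ∀ g, IsAut E (b g)
  one : ∀ x, b 1 x = x
  mul : ∀ g h x, b (g * h) x = b g (b h x)
  lifts : ∀ g x, E.rel (b g x) (a.T g x)

/-- A lift is class-bijective if `g · x E x` implies `g · x = x`. -/
def OuterLift.ClassBijective {G : Type} [Group G] {E : CBER X} {a : OuterAction E G}
    (l : OuterLift a) : Prop :=
  ∀ g x, E.rel (l.b g x) x → l.b g x = x

/-- A Borel action of `G` on the quotient `X/E`, i.e. a homomorphism from `G`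
to the group of Borel permutations of `X/E`. -/
structure QuotientAction (E : CBER X) (G : Type) [Group G] where
  act : G →* Equiv.Perm (Quotient E.setoid)
  borel : ∀ g : G, MeasurableSet
    {p : X × X | act g (Quotient.mk E.setoid p.1) = Quotient.mk E.setoid p.2}

/-- The relation `E^{∨G}` induced by a Borel action on the quotient. -/
def QuotientAction.vee {G : Type} [Group G] {E : CBER X} (a : QuotientAction E G)
    (x y : X) : Prop :=
  ∃ g : G, a.act g (Quotient.mk E.setoid x) = Quotient.mk E.setoid y

/-- A lift of a Borel action on `X/E` to a Borel action on `X` by automorphisms of `E`. -/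
structure QuotientLift {G : Type} [Group G] {E : CBER X} (a : QuotientAction E G) where
  b : G → X → X
  meas : ∀ g, Measurable (b g)
  one : ∀ x, b 1 x = x
  mul : ∀ g h x, b (g * h) x = b g (b h x)
  pres : ∀ g x y, E.rel x y → E.rel (b g x) (b g y)
  equivariant : ∀ g x, a.act g (Quotient.mk E.setoid x) = Quotient.mk E.setoid (b g x)

/-- A lift is class-bijective if `g · x E x` implies `g · x = x`. -/
def QuotientLift.ClassBijective {G : Type} [Group G] {E : CBER X}
    {a : QuotientAction E G} (l : QuotientLift a) : Prop :=
  ∀ g x, E.rel (l.b g x) x → l.b g x = x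

/-- `F` has finite index over `E`: every `F`-class contains finitely many `E`-classes. -/
def FiniteIndex (E F : CBER X) : Prop :=
  ∀ x, ∃ s : Finset X, ∀ y, F.rel x y → ∃ z ∈ s, E.rel y z

/-- `F` has bounded index over `E`. -/
def BoundedIndex (E F : CBER X) : Prop :=
  ∃ N : ℕ, ∀ x, ∃ s : Finset X, s.card ≤ N ∧ ∀ y, F.rel x y → ∃ z ∈ s, E.rel y z

/-- A finite subgroup of `Out_B(E)` generating `F` over `E`, presented as a finite
group with an outer action on `X/E` such that `F = E^{∨G}`. -/
structure FiniteOuterGen (E F : CBER X) where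
  (G : Type)
  [grp : Group G]
  [fin : Finite G]
  act : OuterAction E G
  gen : ∀ x y, F.rel x y ↔ ∃ g : G, E.rel (act.T g x) y

/-- `A` and `B` are `E`-equidecomposable: there is a Borel bijection `A → B`
whose graph is contained in `E`. -/
def Equidec (E : CBER X) (A B : Set X) : Prop :=
  ∃ f : A ≃ B, Measurable (fun a : A => (f a : X)) ∧
    Measurable (fun b : B => (f.symm b : X)) ∧ ∀ a : A, E.rel a (f a)

/-- The `E`-saturation of a set. -/
def Sat (E : CBER X) (A : Set X) : Set X := {x | ∃ a ∈ A, E.rel x a}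

/-- `A` is `E`-null: the restriction of `E` to the `E`-saturation of `A` is compressible. -/
def ENull (E : CBER X) (A : Set X) : Prop := (E.restrict (Sat E A)).Compressible

/-- `A` is `E`-conull. -/
def EConull (E : CBER X) (A : Set X) : Prop := ENull E Aᶜ

/-- An element of `Aut_{NULL_E}(E)`: a `NULL_E`-preserving Borel automorphism of `E`
defined modulo `E`-null sets. -/
structure NullAut (E : CBER X) where
  f : X → X
  g : X → X
  measf : Measurable f
  measg : Measurable g
  C : Set X
  Cconull : EConull E C
  inv₁ : ∀ x ∈ C, g (f x) = x
  inv₂ : ∀ x ∈ C, f (g x) = x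
  pres : ∀ x ∈ C, ∀ y ∈ C, (E.rel x y ↔ E.rel (f x) (f y))
  nullpres : ∀ A : Set X, MeasurableSet A → ENull E A → ENull E (f ⁻¹' A)

/-- Two elements of `Aut_{NULL_E}(E)` represent the same element of `Out_{NULL_E}(E)`. -/
def SameOuter (E : CBER X) (ψ φ : NullAut E) : Prop :=
  ∃ C : Set X, EConull E C ∧ ∀ x ∈ C, E.rel (ψ.f x) (φ.f x)

end Defs

/-- A cardinal algebra: a commutative monoid with an infinitary sum satisfying
the axioms of Tarski. -/
structure CardinalAlgebra (A : Type) [AddCommMonoid A] where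
  tsum : (ℕ → A) → A
  tsum_eq : ∀ a : ℕ → A, tsum a = a 0 + tsum (fun i => a (i + 1))
  tsum_add : ∀ a b : ℕ → A, tsum (fun i => a i + b i) = tsum a + tsum b
  refinement : ∀ (x y : A) (c : ℕ → A), x + y = tsum c →
    ∃ a b : ℕ → A, x = tsum a ∧ y = tsum b ∧ ∀ i, a i + b i = c i
  remainder : ∀ a b : ℕ → A, (∀ i, a i = b i + a (i + 1)) →
    ∃ c : A, ∀ i, a i = c + tsum (fun j => b (i + j))

section Tilings

variable {G : Type} [Group G] [DecidableEq G]

/-- The family of right translates `{Bc : c ∈ C}` is `ε`-disjoint. -/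
def EpsDisjointTranslates (B : Finset G) (ε : ℝ) (C : Finset G) : Prop :=
  ∃ D : G → Finset G,
    (∀ c ∈ C, D c ⊆ B.image (· * c) ∧ (1 - ε) * (B.card : ℝ) ≤ ((D c).card : ℝ)) ∧
    (C : Set G).PairwiseDisjoint D

end Tilings

/-- A witness to treeability of a countable group `G`: a free pmp Borel action on a
standard Borel space whose orbit equivalence relation is treeable. -/
structure TreeingWitness (G : Type) [Group G] where
  (Y : Type)
  [mY : MeasurableSpace Y]
  [sb : StandardBorelSpace Y]
  (μ : MeasureTheory.Measure Y)
  [prob : MeasureTheory.IsProbabilityMeasure μ]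
  b : G → Y ≃ Y
  meas : ∀ g, Measurable (b g)
  meas_symm : ∀ g, Measurable (b g).symm
  one : ∀ y, b 1 y = y
  mul : ∀ g h y, b (g * h) y = b g (b h y)
  mp : ∀ g, MeasureTheory.MeasurePreserving (b g) μ μ
  free : ∀ g : G, g ≠ 1 → ∀ᵐ y ∂μ, b g y ≠ y
  Γ : SimpleGraph Y
  Γmeas : MeasurableSet {p : Y × Y | Γ.Adj p.1 p.2}
  acyclic : Γ.IsAcyclic
  spans : ∀ x y : Y, (∃ g : G, b g x = y) ↔ Γ.Reachable x y

section CAaux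

variable {A : Type} [AddCommMonoid A]

/-- `∞v = v + ∞v`. -/
lemma CA_inf_eq (CA : CardinalAlgebra A) (v : A) :
    CA.tsum (fun _ => v) = v + CA.tsum (fun _ => v) :=
  CA.tsum_eq (fun _ => v)

/-- Antisymmetry (Schröder–Bernstein) in a cardinal algebra. -/
lemma CA_antisymm (CA : CardinalAlgebra A) (x y u v : A)
    (hx : x = y + u) (hy : y = x + v) : x = y := by
  have hxx : ∀ i : ℕ, (fun _ : ℕ => x) i = (fun _ : ℕ => v + u) i + (fun _ : ℕ => x) (i + 1) := by
    intro i
    show x = (v + u) + x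
    calc x = (x + v) + u := by rw [← hy, ← hx]
    _ = (v + u) + x := by abel
  obtain ⟨e, he⟩ := CA.remainder (fun _ => x) (fun _ => v + u) hxx
  have h0 : x = e + CA.tsum (fun _ => v + u) := he 0
  have hsplit : CA.tsum (fun _ : ℕ => v + u)
      = CA.tsum (fun _ => v) + CA.tsum (fun _ => u) :=
    CA.tsum_add (fun _ => v) (fun _ => u)
  have hx' : x = e + CA.tsum (fun _ => v) + CA.tsum (fun _ => u) := by
    rw [h0, hsplit, add_assoc]
  calc x = e + CA.tsum (fun _ => v) + CA.tsum (fun _ => u) := hx'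
  _ = e + (v + CA.tsum (fun _ => v)) + CA.tsum (fun _ => u) := by rw [← CA_inf_eq]
  _ = (e + CA.tsum (fun _ => v) + CA.tsum (fun _ => u)) + v := by abel
  _ = x + v := by rw [← hx']
  _ = y := hy.symm

/-- `∞b + ∞b = ∞b`. -/
lemma CA_inf_idem (CA : CardinalAlgebra A) (b : A) :
    CA.tsum (fun _ => b) + CA.tsum (fun _ => b) = CA.tsum (fun _ => b) := by
  set S := CA.tsum (fun _ : ℕ => b) with hS
  set T := CA.tsum (fun _ : ℕ => b + b) with hT
  have hTsplit : T = S + S := CA.tsum_add (fun _ => b) (fun _ => b)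
  have hSstep : S = b + S := CA_inf_eq CA b
  have hTstep : T = (b + b) + T := CA_inf_eq CA (b + b)
  -- T ≤ S : remainder applied to the interleaved sequence
  have hF : ∃ c₁ : A, T = c₁ + S := by
    have hrec : ∀ i : ℕ,
        (fun i : ℕ => if i % 2 = 0 then T else b + T) i
          = (fun _ : ℕ => b) i + (fun i : ℕ => if i % 2 = 0 then T else b + T) (i + 1) := by
      intro i
      rcases Nat.even_or_odd i with hev | hod
      · have h1 : i % 2 = 0 := Nat.even_iff.mp hev
        have h2 : (i + 1) % 2 = 1 := by omega
        simp only [h1, h2]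
        calc T = (b + b) + T := hTstep
        _ = b + (b + T) := by abel
        _ = b + if (1:ℕ) = 0 then T else b + T := by norm_num
      · have h1 : i % 2 = 1 := Nat.odd_iff.mp hod
        have h2 : (i + 1) % 2 = 0 := by omega
        simp only [h1, h2]
        norm_num
    obtain ⟨c₁, hc₁⟩ := CA.remainder _ (fun _ => b) hrec
    refine ⟨c₁, ?_⟩
    have := hc₁ 0
    simpa using this
  -- S ≤ T : remainder with constant sequences
  have hG : ∃ c₂ : A, S = c₂ + T := by
    have hrec : ∀ i : ℕ, (fun _ : ℕ => S) i
        = (fun _ : ℕ => b + b) i + (fun _ : ℕ => S) (i + 1) := by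
      intro i
      show S = (b + b) + S
      calc S = b + S := hSstep
      _ = b + (b + S) := by conv_lhs => rw [hSstep]
      _ = (b + b) + S := by abel
    obtain ⟨c₂, hc₂⟩ := CA.remainder _ (fun _ => b + b) hrec
    exact ⟨c₂, hc₂ 0⟩
  obtain ⟨c₁, hc₁⟩ := hF
  obtain ⟨c₂, hc₂⟩ := hG
  have : S = T := CA_antisymm CA S T c₂ c₁ (by rw [hc₂, add_comm]) (by rw [hc₁, add_comm])
  rw [← hTsplit, ← this]

end CAaux

/-- In a cardinal algebra, `a = a + b` implies `a = a + ∞b`. -/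
theorem stmt0 {A : Type} [AddCommMonoid A] (CA : CardinalAlgebra A) (a b : A)
    (h : a = a + b) : a = a + CA.tsum (fun _ => b) := by
  have hrec : ∀ i : ℕ, (fun _ : ℕ => a) i
      = (fun _ : ℕ => b) i + (fun _ : ℕ => a) (i + 1) := by
    intro i
    show a = b + a
    conv_lhs => rw [h]
    exact add_comm a b
  obtain ⟨c, hc⟩ := CA.remainder _ (fun _ => b) hrec
  have ha : a = c + CA.tsum (fun _ => b) := hc 0
  calc a = c + CA.tsum (fun _ => b) := ha
  _ = c + (CA.tsum (fun _ => b) + CA.tsum (fun _ => b)) := by rw [CA_inf_idem]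
  _ = (c + CA.tsum (fun _ => b)) + CA.tsum (fun _ => b) := by rw [add_assoc]
  _ = a + CA.tsum (fun _ => b) := by rw [← ha]
end

section
/- Let E be a CBER on X and let G ↷ X/E be a Borel action of a countable group G. Then there exists a class-bijective lift G ↷ (X,E) (i.e., a Borel action of G on X by automorphisms of E inducing the given quotient action, such that g·x E x implies g·x = x) if and only if there exists an (E, E^{∨G})-link. -/
open MeasureTheory Set Pointwise

section Aux

open MeasureTheory

/-- The graph of a measurable function into a standard Borel space is measurable. -/
lemma aux_graph_measurable {X Y : Type} [MeasurableSpace X] [MeasurableSpace Y]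
    [StandardBorelSpace Y] {f : X → Y} (hf : Measurable f) :
    MeasurableSet {p : X × Y | f p.1 = p.2} := by
  letI := upgradeStandardBorel Y
  have hd : MeasurableSet (Set.diagonal Y) := isClosed_diagonal.measurableSet
  exact ((hf.comp measurable_fst).prodMk measurable_snd) hd

/-- A function between standard Borel spaces with measurable graph is measurable. -/
lemma aux_measurable_of_graph {X Y : Type} [MeasurableSpace X] [StandardBorelSpace X]
    [MeasurableSpace Y] [StandardBorelSpace Y] (f : X → Y)
    (hf : MeasurableSet {p : X × Y | f p.1 = p.2}) : Measurable f := by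
  letI := upgradeStandardBorel X
  have key : ∀ C : Set Y, MeasurableSet C → AnalyticSet (f ⁻¹' C) := by
    intro C hC
    have h1 : MeasurableSet ({p : X × Y | f p.1 = p.2} ∩ (Set.univ ×ˢ C)) :=
      hf.inter (MeasurableSet.univ.prod hC)
    have h2 : f ⁻¹' C = Prod.fst '' ({p : X × Y | f p.1 = p.2} ∩ (Set.univ ×ˢ C)) := by
      ext x
      constructor
      · intro hx; exact ⟨(x, f x), ⟨rfl, ⟨trivial, hx⟩⟩, rfl⟩
      · rintro ⟨⟨u, v⟩, ⟨(he : f u = v), ⟨-, hv⟩⟩, rfl⟩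
        simpa [Set.mem_preimage, he] using hv
    rw [h2]
    exact h1.analyticSet_image measurable_fst
  intro B hB
  refine (key B hB).measurableSet_of_compl ?_
  have : (f ⁻¹' B)ᶜ = f ⁻¹' Bᶜ := by ext x; simp
  rw [this]
  exact key Bᶜ hB.compl

end Aux

/-- a Borel action on `X/E` has a class-bijective lift iff
there is an `(E, E^{∨G})`-link. -/
theorem stmt5 {X : Type} [MeasurableSpace X] [StandardBorelSpace X] (E : CBER X)
    {G : Type} [Group G] [Countable G] (a : QuotientAction E G) :
    (∃ l : QuotientLift a, l.ClassBijective) ↔ ∃ L : CBER X, IsLink E a.vee L := by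
  constructor
  · -- lift ⟹ link: take the orbit equivalence relation of the lifted action
    rintro ⟨l, hcb⟩
    have hinv : ∀ (g : G) (x : X), l.b g⁻¹ (l.b g x) = x := by
      intro g x
      rw [← l.mul, inv_mul_cancel, l.one]
    refine ⟨⟨fun x y => ∃ g : G, l.b g x = y, ⟨fun x => ⟨1, l.one x⟩, ?_, ?_⟩, ?_, ?_⟩, ?_, ?_⟩
    · rintro x y ⟨g, rfl⟩
      exact ⟨g⁻¹, hinv g x⟩
    · rintro x y z ⟨g, rfl⟩ ⟨h, rfl⟩
      exact ⟨h * g, l.mul h g x⟩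
    · -- measurability of the orbit equivalence relation
      have : {p : X × X | ∃ g : G, l.b g p.1 = p.2} =
          ⋃ g : G, {p : X × X | l.b g p.1 = p.2} := by
        ext p; simp [Set.mem_iUnion]
      rw [this]
      exact MeasurableSet.iUnion fun g => aux_graph_measurable (l.meas g)
    · -- countable classes
      intro x
      exact Set.countable_range (fun g : G => l.b g x)
    · -- L ⊆ E^{∨G}
      rintro x y ⟨g, hg⟩
      exact ⟨g, by rw [l.equivariant g x, hg]⟩
    · -- link property
      rintro x y ⟨g, hg⟩
      have hq : Quotient.mk E.setoid (l.b g x) = Quotient.mk E.setoid y := by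
        rw [← l.equivariant]; exact hg
      have hE : E.rel (l.b g x) y := Quotient.exact hq
      have hEz : E.rel x (l.b g⁻¹ y) := by
        have := l.pres g⁻¹ _ _ hE
        rwa [hinv] at this
      refine ⟨l.b g⁻¹ y, ⟨hEz, ⟨g⁻¹, rfl⟩⟩, ?_⟩
      rintro z' ⟨hEz', h, rfl⟩
      have h1 : l.b g (l.b g⁻¹ y) = y := by rw [← l.mul, mul_inv_cancel, l.one]
      have hyz : l.b h y = l.b (h * g) (l.b g⁻¹ y) := by rw [l.mul, h1]
      have hrel : E.rel (l.b (h * g) (l.b g⁻¹ y)) (l.b g⁻¹ y) := by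
        rw [← hyz]
        exact E.iseqv.trans (E.iseqv.symm hEz') hEz
      rw [hyz]
      exact hcb (h * g) _ hrel
  · -- link ⟹ lift
    rintro ⟨L, hL1, hL2⟩
    have key : ∀ (g : G) (x : X), ∃! z : X,
        Quotient.mk E.setoid z = a.act g (Quotient.mk E.setoid x) ∧ L.rel x z := by
      intro g x
      set v := (a.act g (Quotient.mk E.setoid x)).out with hv
      have hvq : Quotient.mk E.setoid v = a.act g (Quotient.mk E.setoid x) :=
        Quotient.out_eq _
      have hvee : a.vee v x := ⟨g⁻¹, by rw [hvq, map_inv]; exact Equiv.symm_apply_apply _ _⟩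
      obtain ⟨z, ⟨hEz, hLz⟩, huniq⟩ := hL2 v x hvee
      refine ⟨z, ⟨?_, hLz⟩, ?_⟩
      · rw [← hvq]
        exact (Quotient.sound hEz).symm
      · rintro z' ⟨hz'q, hLz'⟩
        exact huniq z' ⟨Quotient.exact (hvq.trans hz'q.symm), hLz'⟩
    choose b hb using key
    have hbq : ∀ (g : G) (x : X),
        Quotient.mk E.setoid (b g x) = a.act g (Quotient.mk E.setoid x) :=
      fun g x => (hb g x).1.1
    have hbL : ∀ (g : G) (x : X), L.rel x (b g x) := fun g x => (hb g x).1.2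
    have hbu : ∀ (g : G) (x z : X),
        Quotient.mk E.setoid z = a.act g (Quotient.mk E.setoid x) → L.rel x z →
        z = b g x := fun g x z h1 h2 => (hb g x).2 z ⟨h1, h2⟩
    refine ⟨⟨b, ?_, ?_, ?_, ?_, ?_⟩, ?_⟩
    · -- measurability
      intro g
      apply aux_measurable_of_graph
      have : {p : X × X | b g p.1 = p.2} =
          {p : X × X | a.act g (Quotient.mk E.setoid p.1) = Quotient.mk E.setoid p.2
            ∧ L.rel p.1 p.2} := by
        ext ⟨x, y⟩
        simp only [Set.mem_setOf_eq]
        constructor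
        · rintro rfl
          exact ⟨(hbq g x).symm, hbL g x⟩
        · rintro ⟨h1, h2⟩
          exact (hbu g x y h1.symm h2).symm
      rw [this]
      exact (a.borel g).inter L.meas
    · -- identity
      intro x
      refine (hbu 1 x x ?_ (L.iseqv.refl x)).symm
      simp
    · -- multiplicativity
      intro g h x
      refine (hbu (g * h) x (b g (b h x)) ?_ (L.iseqv.trans (hbL h x) (hbL g (b h x)))).symm
      rw [hbq, hbq, map_mul]
      rfl
    · -- preserves E
      intro g x y hxy
      have : Quotient.mk E.setoid (b g x) = Quotient.mk E.setoid (b g y) := by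
        rw [hbq, hbq, Quotient.sound hxy]
      exact Quotient.exact this
    · -- equivariance
      exact fun g x => (hbq g x).symm
    · -- class-bijectivity
      intro g x hEx
      have h1 : Quotient.mk E.setoid x = a.act g (Quotient.mk E.setoid x) := by
        rw [← hbq g x]
        exact (Quotient.sound hEx).symm
      exact (hbu g x x h1 (L.iseqv.refl x)).symm
end

section
/- Let E ⊆ F be CBERs with E of bounded index in F (there is N such that every F-class contains at most N E-classes). Then E ◁ F if and only if there exists a finite subgroup G ≤ Out_B(E) with F = E^{∨G}. -/
open MeasureTheory Set Pointwise

namespace Stmt13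
noncomputable section
open Classical
attribute [local instance] Classical.propDecidable

variable {X : Type} [MeasurableSpace X]

/-- Bundled data: a countable family of `E`-automorphisms closed (pointwise) under
composition and inverse, generating `F` over `E`, with a uniform bound on the index. -/
structure Words (E F : CBER X) where
  u : ℕ → X ≃ X
  u0 : ∀ x : X, u 0 x = x
  cmp : ℕ → ℕ → ℕ
  hcmp : ∀ a b (x : X), u (cmp a b) x = u a (u b x)
  inv : ℕ → ℕ
  hinv : ∀ a (x : X), u (inv a) x = (u a).symm x
  aut : ∀ m, IsAut E (u m)
  gen : ∀ x y, F.rel x y ↔ ∃ m, E.rel (u m x) y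
  Nb : ℕ
  Nbpos : 0 < Nb
  hbd : ∀ (x : X) (s : Finset ℕ),
    (∀ a ∈ s, ∀ b ∈ s, a ≠ b → ¬ E.rel (u a x) (u b x)) → s.card ≤ Nb

namespace Words

variable {E F : CBER X} (W : Words E F)
include W

lemma uE (m : ℕ) {x y : X} (h : E.rel x y) : E.rel (W.u m x) (W.u m y) :=
  ((W.aut m).2.2 x y).mpr h

lemma uEs (m : ℕ) {x y : X} (h : E.rel x y) : E.rel ((W.u m).symm x) ((W.u m).symm y) := by
  have := ((W.aut m).2.2 ((W.u m).symm x) ((W.u m).symm y)).mp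
  simp only [Equiv.apply_symm_apply] at this
  exact this h

/-- `F x y` for any word applied to `x`. -/
lemma F_all (x : X) (m : ℕ) : F.rel x (W.u m x) :=
  (W.gen x (W.u m x)).mpr ⟨m, E.iseqv.refl _⟩

lemma E_le_F {x y : X} (h : E.rel x y) : F.rel x y := by
  refine (W.gen x y).mpr ⟨0, ?_⟩
  rw [W.u0]; exact h

/-- Index of the first word `E`-equivalent (at `x`) to word `m`. -/
def fd (x : X) (m : ℕ) : ℕ := sInf {a | E.rel (W.u a x) (W.u m x)}

lemma fd_spec (x : X) (m : ℕ) : E.rel (W.u (W.fd x m) x) (W.u m x) :=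
  Nat.sInf_mem (⟨m, E.iseqv.refl _⟩ : {a | E.rel (W.u a x) (W.u m x)}.Nonempty)

lemma fd_le (x : X) (m : ℕ) : W.fd x m ≤ m := Nat.sInf_le (E.iseqv.refl _)

lemma fd_congr {x : X} {m m' : ℕ} (h : E.rel (W.u m x) (W.u m' x)) :
    W.fd x m = W.fd x m' := by
  unfold fd
  congr 1
  ext a
  exact ⟨fun ha => E.iseqv.trans ha h, fun ha => E.iseqv.trans ha (E.iseqv.symm h)⟩

lemma fd_idem (x : X) (m : ℕ) : W.fd x (W.fd x m) = W.fd x m :=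
  W.fd_congr (W.fd_spec x m)

def isNew (x : X) (m : ℕ) : Prop := W.fd x m = m

lemma isNew_fd (x : X) (m : ℕ) : W.isNew x (W.fd x m) := W.fd_idem x m

lemma isNew_zero (x : X) : W.isNew x 0 := Nat.le_zero.mp (W.fd_le x 0)

/-- Number of new indices below `a`. -/
def cnt (x : X) (a : ℕ) : ℕ := ((Finset.range a).filter (fun b => W.isNew x b)).card

lemma cnt_zero (x : X) : W.cnt x 0 = 0 := by simp [cnt]

lemma cnt_lt_cnt {x : X} {a a' : ℕ} (ha : W.isNew x a) (hlt : a < a') :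
    W.cnt x a < W.cnt x a' := by
  apply Finset.card_lt_card
  constructor
  · intro b hb
    simp only [Finset.mem_filter, Finset.mem_range] at hb ⊢
    exact ⟨lt_trans hb.1 hlt, hb.2⟩
  · intro hsub
    have : a ∈ (Finset.range a').filter (fun b => W.isNew x b) := by
      simp only [Finset.mem_filter, Finset.mem_range]; exact ⟨hlt, ha⟩
    have := hsub this
    simp only [Finset.mem_filter, Finset.mem_range] at this
    exact lt_irrefl a this.1

/-- The index (rank) of the `E`-class of `W.u m x` among classes of `[x]_F`. -/
def rk (x : X) (m : ℕ) : ℕ := W.cnt x (W.fd x m)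

lemma rk_congr {x : X} {m m' : ℕ} :
    W.rk x m = W.rk x m' ↔ E.rel (W.u m x) (W.u m' x) := by
  constructor
  · intro h
    rcases lt_trichotomy (W.fd x m) (W.fd x m') with hlt | heq | hgt
    · exact absurd h (ne_of_lt (W.cnt_lt_cnt (W.isNew_fd x m) hlt))
    · exact E.iseqv.trans (E.iseqv.symm (heq ▸ W.fd_spec x m)) (W.fd_spec x m')
    · exact absurd h.symm (ne_of_lt (W.cnt_lt_cnt (W.isNew_fd x m') hgt))
  · intro h
    unfold rk
    rw [W.fd_congr h]

lemma fd_base {x x' : X} (h : E.rel x x') (m : ℕ) : W.fd x m = W.fd x' m := by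
  unfold fd
  congr 1
  ext a
  constructor
  · intro ha
    exact E.iseqv.trans (E.iseqv.trans (E.iseqv.symm (W.uE a h)) ha) (W.uE m h)
  · intro ha
    exact E.iseqv.trans (E.iseqv.trans (W.uE a h) ha) (E.iseqv.symm (W.uE m h))

lemma isNew_base {x x' : X} (h : E.rel x x') (m : ℕ) : W.isNew x m ↔ W.isNew x' m := by
  unfold isNew; rw [W.fd_base h]

lemma cnt_base {x x' : X} (h : E.rel x x') (a : ℕ) : W.cnt x a = W.cnt x' a := by
  unfold cnt
  congr 1
  apply Finset.filter_congr
  intro b _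
  simp [W.isNew_base h]

lemma rk_base {x x' : X} (h : E.rel x x') (m : ℕ) : W.rk x m = W.rk x' m := by
  unfold rk; rw [W.fd_base h, W.cnt_base h]

lemma cnt_lt_Nb {x : X} {a : ℕ} (ha : W.isNew x a) : W.cnt x a < W.Nb := by
  have hs : ∀ b ∈ insert a ((Finset.range a).filter (fun b => W.isNew x b)),
      ∀ c ∈ insert a ((Finset.range a).filter (fun b => W.isNew x b)),
      b ≠ c → ¬ E.rel (W.u b x) (W.u c x) := by
    intro b hb c hc hbc hE
    have hbn : W.isNew x b := by
      rcases Finset.mem_insert.mp hb with rfl | hb'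
      · exact ha
      · exact (Finset.mem_filter.mp hb').2
    have hcn : W.isNew x c := by
      rcases Finset.mem_insert.mp hc with rfl | hc'
      · exact ha
      · exact (Finset.mem_filter.mp hc').2
    exact hbc (hbn.symm.trans ((W.fd_congr hE).trans hcn))
  have hcard := W.hbd x _ hs
  have hnotmem : a ∉ (Finset.range a).filter (fun b => W.isNew x b) := by
    simp [Finset.mem_filter]
  rw [Finset.card_insert_of_notMem hnotmem] at hcard
  unfold cnt
  omega

lemma rk_lt_Nb (x : X) (m : ℕ) : W.rk x m < W.Nb := W.cnt_lt_Nb (W.isNew_fd x m)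

/-- The number of `E`-classes in `[x]_F`. -/
def kk (x : X) : ℕ := sInf {j | ∀ m, W.rk x m < j}

lemma rk_lt_kk (x : X) (m : ℕ) : W.rk x m < W.kk x :=
  Nat.sInf_mem (⟨W.Nb, fun m => W.rk_lt_Nb x m⟩ : {j | ∀ m, W.rk x m < j}.Nonempty) m

lemma kk_le_Nb (x : X) : W.kk x ≤ W.Nb := Nat.sInf_le (fun m => W.rk_lt_Nb x m)

lemma kk_pos (x : X) : 0 < W.kk x := lt_of_le_of_lt (Nat.zero_le _) (W.rk_lt_kk x 0)

lemma kk_base {x x' : X} (h : E.rel x x') : W.kk x = W.kk x' := by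
  unfold kk
  congr 1
  ext j
  constructor <;> intro hj m
  · rw [← W.rk_base h]; exact hj m
  · rw [W.rk_base h]; exact hj m

lemma cnt_attain {x : X} {a : ℕ} (ha : W.isNew x a) :
    ∀ j < W.cnt x a, ∃ a', W.isNew x a' ∧ a' < a ∧ W.cnt x a' = j := by
  induction a using Nat.strong_induction_on with
  | _ a IH =>
    intro j hj
    have hTne : ((Finset.range a).filter (fun b => W.isNew x b)).Nonempty :=
      Finset.card_pos.mp (lt_of_le_of_lt (Nat.zero_le j) hj)
    obtain ⟨hr, hnew⟩ := Finset.mem_filter.mp (Finset.max'_mem _ hTne)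
    rw [Finset.mem_range] at hr
    have hset : (Finset.range (((Finset.range a).filter (fun b => W.isNew x b)).max' hTne)).filter
        (fun b => W.isNew x b) =
        ((Finset.range a).filter (fun b => W.isNew x b)).erase
          (((Finset.range a).filter (fun b => W.isNew x b)).max' hTne) := by
      ext b
      simp only [Finset.mem_filter, Finset.mem_range, Finset.mem_erase]
      constructor
      · rintro ⟨hb1, hb2⟩
        exact ⟨Nat.ne_of_lt hb1, ⟨lt_trans hb1 hr, hb2⟩⟩
      · rintro ⟨hne, hb1, hb2⟩
        refine ⟨lt_of_le_of_ne ?_ hne, hb2⟩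
        exact Finset.le_max' _ b (by rw [Finset.mem_filter, Finset.mem_range]; exact ⟨hb1, hb2⟩)
    have hcnt'' : W.cnt x (((Finset.range a).filter (fun b => W.isNew x b)).max' hTne)
        = W.cnt x a - 1 := by
      unfold cnt
      rw [hset, Finset.card_erase_of_mem (Finset.max'_mem _ hTne)]
    rcases eq_or_lt_of_le (Nat.le_sub_one_of_lt hj) with heq | hlt
    · exact ⟨_, hnew, hr, by rw [hcnt'', heq]⟩
    · obtain ⟨a', h1, h2, h3⟩ := IH _ hr hnew j (by omega)
      exact ⟨a', h1, lt_trans h2 hr, h3⟩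

lemma rk_attain (x : X) : ∀ j < W.kk x, ∃ m, W.rk x m = j := by
  intro j hj
  have hknz : W.kk x ≠ 0 := Nat.pos_iff_ne_zero.mp (W.kk_pos x)
  have hnm : ¬ (∀ m, W.rk x m < W.kk x - 1) := by
    intro hc
    have : W.kk x ≤ W.kk x - 1 := Nat.sInf_le hc
    omega
  push_neg at hnm
  obtain ⟨m, hm⟩ := hnm
  have hm' : W.rk x m = W.kk x - 1 := le_antisymm (Nat.le_sub_one_of_lt (W.rk_lt_kk x m)) hm
  rcases eq_or_lt_of_le (Nat.le_sub_one_of_lt hj) with heq | hlt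
  · exact ⟨m, by rw [hm', heq]⟩
  · obtain ⟨a', h1, _, h3⟩ := W.cnt_attain (W.isNew_fd x m) j (by rw [← hm'] at hlt; exact hlt)
    refine ⟨a', ?_⟩
    unfold rk
    rw [h1, h3]

/-- The word index of the `j`-th `E`-class of `[x]_F` (in base-`x` enumeration). -/
def nthw (x : X) (j : ℕ) : ℕ := sInf {a | W.isNew x a ∧ W.cnt x a = j}

lemma nthw_spec {x : X} {j : ℕ} (hj : j < W.kk x) :
    W.isNew x (W.nthw x j) ∧ W.cnt x (W.nthw x j) = j := by
  obtain ⟨m, hm⟩ := W.rk_attain x j hj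
  exact Nat.sInf_mem (⟨W.fd x m, W.isNew_fd x m, hm⟩ :
    {a | W.isNew x a ∧ W.cnt x a = j}.Nonempty)

lemma rk_nthw {x : X} {j : ℕ} (hj : j < W.kk x) : W.rk x (W.nthw x j) = j := by
  obtain ⟨h1, h2⟩ := W.nthw_spec hj
  unfold rk
  rw [h1, h2]

lemma nthw_zero (x : X) : W.nthw x 0 = 0 :=
  Nat.le_zero.mp (Nat.sInf_le ⟨W.isNew_zero x, W.cnt_zero x⟩)

lemma nthw_base {x x' : X} (h : E.rel x x') (j : ℕ) : W.nthw x j = W.nthw x' j := by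
  unfold nthw
  congr 1
  ext a
  simp only [Set.mem_setOf_eq, W.isNew_base h, W.cnt_base h]

/-- Base point of the `i`-th class. -/
def bpt (x : X) (i : ℕ) : X := W.u (W.nthw x i) x

lemma bpt_zero (x : X) : W.bpt x 0 = x := by
  unfold bpt
  rw [W.nthw_zero, W.u0]

lemma bpt_base {x x' : X} (h : E.rel x x') (i : ℕ) : E.rel (W.bpt x i) (W.bpt x' i) := by
  unfold bpt
  rw [W.nthw_base h]
  exact W.uE _ h

lemma F_bpt (x : X) (i : ℕ) : F.rel x (W.bpt x i) := W.F_all x _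

/-- The transition matrix: `chat x i j` is the index, in the enumeration based at the
`i`-th class, of the `j`-th class (base-`x` enumeration). -/
def chat (x : X) (i j : ℕ) : ℕ :=
  W.rk (W.bpt x i) (W.cmp (W.nthw x j) (W.inv (W.nthw x i)))

lemma chat_wd (x : X) (i j : ℕ) :
    W.u (W.cmp (W.nthw x j) (W.inv (W.nthw x i))) (W.bpt x i) = W.u (W.nthw x j) x := by
  rw [W.hcmp, W.hinv]
  unfold bpt
  rw [Equiv.symm_apply_apply]

lemma chat_iff (x : X) (i j : ℕ) (m' : ℕ) :
    W.rk (W.bpt x i) m' = W.chat x i j ↔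
      E.rel (W.u m' (W.bpt x i)) (W.u (W.nthw x j) x) := by
  unfold chat
  rw [W.rk_congr, W.chat_wd]

lemma kk_F {x y : X} (h : F.rel x y) : W.kk x = W.kk y := by
  have key : ∀ x y : X, F.rel x y → W.kk x ≤ W.kk y := by
    intro x y h
    have hex : ∀ j : Fin (W.kk x), ∃ m', E.rel (W.u m' y) (W.u (W.nthw x j) x) := by
      intro j
      have : F.rel y (W.u (W.nthw x j) x) :=
        F.iseqv.trans (F.iseqv.symm h) (W.F_all x _)
      exact (W.gen y _).mp this
    choose mc hmc using hex
    have hinj : Function.Injective (fun j : Fin (W.kk x) =>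
        (⟨W.rk y (mc j), W.rk_lt_kk y _⟩ : Fin (W.kk y))) := by
      intro j j' hjj
      simp only [Fin.mk.injEq] at hjj
      have hE : E.rel (W.u (mc j) y) (W.u (mc j') y) := W.rk_congr.mp hjj
      have : E.rel (W.u (W.nthw x j) x) (W.u (W.nthw x j') x) :=
        E.iseqv.trans (E.iseqv.trans (E.iseqv.symm (hmc j)) hE) (hmc j')
      have := W.rk_congr.mpr this
      rw [W.rk_nthw j.isLt, W.rk_nthw j'.isLt] at this
      exact Fin.ext this
    simpa using Fintype.card_le_of_injective _ hinj
  exact le_antisymm (key x y h) (key y x (F.iseqv.symm h))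

lemma kk_bpt (x : X) (i : ℕ) : W.kk (W.bpt x i) = W.kk x :=
  (W.kk_F (W.F_bpt x i)).symm

lemma chat_lt_kk (x : X) (i j : ℕ) : W.chat x i j < W.kk x := by
  have := W.rk_lt_kk (W.bpt x i) (W.cmp (W.nthw x j) (W.inv (W.nthw x i)))
  rw [W.kk_bpt] at this
  exact this

lemma bpt_corr {x : X} {i j : ℕ} (hj : j < W.kk x) :
    E.rel (W.u (W.nthw (W.bpt x i) (W.chat x i j)) (W.bpt x i)) (W.u (W.nthw x j) x) := by
  rw [← W.chat_iff]
  apply W.rk_nthw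
  rw [W.kk_bpt]
  exact W.chat_lt_kk x i j

lemma chat_diag (x : X) (i : ℕ) : W.chat x i i = 0 := by
  have h1 : W.u (W.cmp (W.nthw x i) (W.inv (W.nthw x i))) (W.bpt x i) = W.bpt x i :=
    W.chat_wd x i i
  have h2 : E.rel (W.u (W.cmp (W.nthw x i) (W.inv (W.nthw x i))) (W.bpt x i))
      (W.u 0 (W.bpt x i)) := by
    rw [h1, W.u0]
    exact E.iseqv.refl _
  have h3 := W.rk_congr.mpr h2
  unfold chat
  rw [h3]
  unfold rk
  rw [W.isNew_zero, W.cnt_zero]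

lemma chat_zero {x : X} {j : ℕ} (hj : j < W.kk x) : W.chat x 0 j = j := by
  have h1 : E.rel (W.u (W.cmp (W.nthw x j) (W.inv (W.nthw x 0))) (W.bpt x 0))
      (W.u (W.nthw x j) x) := by
    rw [W.chat_wd]
    exact E.iseqv.refl _
  unfold chat
  rw [W.bpt_zero] at h1 ⊢
  rw [W.rk_congr.mpr h1, W.rk_nthw hj]

lemma chat_inj {x : X} {i j j' : ℕ} (hj : j < W.kk x) (hj' : j' < W.kk x)
    (h : W.chat x i j = W.chat x i j') : j = j' := by
  have h1 : E.rel (W.u (W.cmp (W.nthw x j) (W.inv (W.nthw x i))) (W.bpt x i))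
      (W.u (W.cmp (W.nthw x j') (W.inv (W.nthw x i))) (W.bpt x i)) := W.rk_congr.mp h
  rw [W.chat_wd, W.chat_wd] at h1
  have := W.rk_congr.mpr h1
  rw [W.rk_nthw hj, W.rk_nthw hj'] at this
  exact this

lemma chat_surj {x : X} (i : ℕ) {c : ℕ} (hc : c < W.kk x) :
    ∃ j, j < W.kk x ∧ W.chat x i j = c := by
  have hbij : Function.Bijective (fun j : Fin (W.kk x) =>
      (⟨W.chat x i j, W.chat_lt_kk x i j⟩ : Fin (W.kk x))) := by
    rw [← Finite.injective_iff_bijective]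
    intro j j' hjj
    simp only [Fin.mk.injEq] at hjj
    exact Fin.ext (W.chat_inj j.isLt j'.isLt hjj)
  obtain ⟨j, hjv⟩ := hbij.2 ⟨c, hc⟩
  exact ⟨j, j.isLt, by simpa using congrArg Fin.val hjv⟩

lemma chat_coh {x : X} {i a b : ℕ} (hi : i < W.kk x) (ha : a < W.kk x) (hb : b < W.kk x) :
    W.chat (W.bpt x i) (W.chat x i a) (W.chat x i b) = W.chat x a b := by
  set y := W.bpt x i with hy
  set A := W.chat x i a with hA
  set B := W.chat x i b with hB
  have h1 : E.rel (W.u (W.nthw y A) y) (W.u (W.nthw x a) x) := W.bpt_corr ha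
  have h2 : E.rel (W.u (W.nthw y B) y) (W.u (W.nthw x b) x) := W.bpt_corr hb
  -- z := bpt y A, z' := bpt x a, E z z'
  have hz : E.rel (W.bpt y A) (W.bpt x a) := h1
  set w1 := W.cmp (W.nthw y B) (W.inv (W.nthw y A)) with hw1
  set w2 := W.cmp (W.nthw x b) (W.inv (W.nthw x a)) with hw2
  have e1 : W.chat y A B = W.rk (W.bpt y A) w1 := rfl
  have e2 : W.chat x a b = W.rk (W.bpt x a) w2 := rfl
  rw [e1, e2, W.rk_base hz]
  apply W.rk_congr.mpr
  have hw1v : W.u w1 (W.bpt x a) = W.u w1 (W.bpt x a) := rfl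
  -- E (u w1 (bpt x a)) (u w1 (bpt y A)) = u (nthw y B) y ~ bpt x b = u w2 (bpt x a)
  have c1 : E.rel (W.u w1 (W.bpt x a)) (W.u w1 (W.bpt y A)) := W.uE _ (E.iseqv.symm hz)
  have c2 : W.u w1 (W.bpt y A) = W.u (W.nthw y B) y := W.chat_wd y A B
  have c3 : W.u w2 (W.bpt x a) = W.u (W.nthw x b) x := W.chat_wd x a b
  rw [c2] at c1
  rw [c3]
  exact E.iseqv.trans c1 h2
end Words

theorem Equiv.Perm.inv_apply_self {α : Type*} (f : Equiv.Perm α) (x : α) : f⁻¹ (f x) = x :=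
  Equiv.symm_apply_apply f x

theorem Equiv.Perm.apply_inv_self {α : Type*} (f : Equiv.Perm α) (x : α) : f (f⁻¹ x) = x :=
  Equiv.apply_symm_apply f x

section FinitePart

variable {n : ℕ}

/-- `σ` is an isomorphism from the structure `M` to `M'` (matrices on `Fin n`,
with the real part being indices `< k₀`). -/
def Iso (k₀ : ℕ) (M M' : Fin n → Fin n → Fin n) (σ : Equiv.Perm (Fin n)) : Prop :=
  (∀ i j : Fin n, (i : ℕ) < k₀ → (j : ℕ) < k₀ → M' (σ i) (σ j) = M i j) ∧
    ∀ i : Fin n, ¬ (i : ℕ) < k₀ → σ i = i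

lemma Iso.one (k₀ : ℕ) (M : Fin n → Fin n → Fin n) : Iso k₀ M M 1 :=
  ⟨fun i j _ _ => rfl, fun i _ => rfl⟩

lemma Iso.lt {k₀ : ℕ} {M M' : Fin n → Fin n → Fin n} {σ : Equiv.Perm (Fin n)}
    (h : Iso k₀ M M' σ) {i : Fin n} (hi : (i : ℕ) < k₀) : ((σ i : Fin n) : ℕ) < k₀ := by
  by_contra hc
  have h1 : σ (σ i) = σ i := h.2 (σ i) hc
  have := σ.injective h1
  rw [this] at hc
  exact hc hi

lemma Iso.symm {k₀ : ℕ} {M M' : Fin n → Fin n → Fin n} {σ : Equiv.Perm (Fin n)}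
    (h : Iso k₀ M M' σ) : Iso k₀ M' M σ⁻¹ := by
  have hinvlt : ∀ i : Fin n, (i : ℕ) < k₀ → ((σ⁻¹ i : Fin n) : ℕ) < k₀ := by
    intro i hi
    by_contra hc
    have h1 : σ (σ⁻¹ i) = σ⁻¹ i := h.2 (σ⁻¹ i) hc
    rw [Equiv.Perm.apply_inv_self] at h1
    rw [← h1] at hc
    exact hc hi
  constructor
  · intro i j hi hj
    have := h.1 (σ⁻¹ i) (σ⁻¹ j) (hinvlt i hi) (hinvlt j hj)
    rw [Equiv.Perm.apply_inv_self, Equiv.Perm.apply_inv_self] at this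
    exact this.symm
  · intro i hi
    have h1 : σ i = i := h.2 i hi
    nth_rewrite 1 [← h1]
    exact Equiv.Perm.inv_apply_self σ i

lemma Iso.trans {k₀ : ℕ} {M M' M'' : Fin n → Fin n → Fin n} {σ τ : Equiv.Perm (Fin n)}
    (h : Iso k₀ M M' σ) (h' : Iso k₀ M' M'' τ) : Iso k₀ M M'' (τ * σ) := by
  constructor
  · intro i j hi hj
    rw [Equiv.Perm.mul_apply, Equiv.Perm.mul_apply]
    rw [h'.1 (σ i) (σ j) (h.lt hi) (h.lt hj)]
    exact h.1 i j hi hj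
  · intro i hi
    rw [Equiv.Perm.mul_apply, h.2 i hi, h'.2 i hi]

/-- The automorphism group of the structure `(k₀, M)`. -/
def AutSG (k₀ : ℕ) (M : Fin n → Fin n → Fin n) : Subgroup (Equiv.Perm (Fin n)) where
  carrier := {σ | Iso k₀ M M σ}
  one_mem' := Iso.one k₀ M
  mul_mem' := fun {a b} ha hb => Iso.trans hb ha
  inv_mem' := fun {a} ha => Iso.symm ha

lemma mem_AutSG {k₀ : ℕ} {M : Fin n → Fin n → Fin n} {σ : Equiv.Perm (Fin n)} :
    σ ∈ AutSG k₀ M ↔ Iso k₀ M M σ := Iff.rfl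

/-- Rows of `M` injective on the real part. -/
def GoodRows (k₀ : ℕ) (M : Fin n → Fin n → Fin n) : Prop :=
  ∀ i j j' : Fin n, (i : ℕ) < k₀ → (j : ℕ) < k₀ → (j' : ℕ) < k₀ → M i j = M i j' → j = j'

lemma AutSG_free {k₀ : ℕ} {M : Fin n → Fin n → Fin n} (hrow : GoodRows k₀ M)
    {σ : Equiv.Perm (Fin n)} (hσ : σ ∈ AutSG k₀ M) {i : Fin n} (hi : (i : ℕ) < k₀)
    (hfix : σ i = i) : σ = 1 := by
  ext j
  rcases Classical.em ((j : ℕ) < k₀) with hj | hj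
  · have h1 := hσ.1 i j hi hj
    rw [hfix] at h1
    have := hrow i (σ j) j hi (hσ.lt hj) hj h1
    exact congrArg Fin.val this
  · exact congrArg Fin.val (hσ.2 j hj)

lemma AutSG_uniq {k₀ : ℕ} {M : Fin n → Fin n → Fin n} (hrow : GoodRows k₀ M)
    {σ τ : Equiv.Perm (Fin n)} (hσ : σ ∈ AutSG k₀ M) (hτ : τ ∈ AutSG k₀ M)
    {i : Fin n} (hi : (i : ℕ) < k₀) (heq : σ i = τ i) : σ = τ := by
  have hmem : τ⁻¹ * σ ∈ AutSG k₀ M := mul_mem (inv_mem hτ) hσ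
  have hfix : (τ⁻¹ * σ) i = i := by
    rw [Equiv.Perm.mul_apply, heq, Equiv.Perm.inv_apply_self]
  have := AutSG_free hrow hmem hi hfix
  have h2 : τ * (τ⁻¹ * σ) = τ * 1 := by rw [this]
  rw [← mul_assoc, mul_inv_cancel, one_mul, mul_one] at h2
  exact h2

/-- Centralizer transitivity: for a freely-acting automorphism group, there is a
commuting permutation taking `0` to any prescribed real index. -/
lemma CT {k₀ : ℕ} {M : Fin n → Fin n → Fin n} (hn : 0 < n) (hrow : GoodRows k₀ M)
    (hk : 0 < k₀) (i₀ : Fin n) (hi₀ : (i₀ : ℕ) < k₀) :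
    ∃ z : Equiv.Perm (Fin n), (∀ σ ∈ AutSG k₀ M, z * σ = σ * z) ∧
      (∀ i : Fin n, ¬ (i : ℕ) < k₀ → z i = i) ∧ z ⟨0, hn⟩ = i₀ := by
  classical
  set o : Fin n := ⟨0, hn⟩ with ho
  have hok : (o : ℕ) < k₀ := hk
  set A := AutSG (n := n) k₀ M with hA
  -- branch function
  set f : Fin n → Fin n := fun i =>
    if h : ∃ σ ∈ A, σ o = i then (Classical.choose h) i₀
    else if h' : ∃ σ ∈ A, σ i₀ = i then (Classical.choose h') o
    else i with hf
  have fval1 : ∀ σ ∈ A, f (σ o) = σ i₀ := by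
    intro σ hσ
    have hex : ∃ τ ∈ A, τ o = σ o := ⟨σ, hσ, rfl⟩
    have hch := Classical.choose_spec hex
    simp only [hf, dif_pos hex]
    rw [AutSG_uniq hrow hch.1 hσ hok hch.2]
  have fval2 : ∀ σ ∈ A, (¬ ∃ τ ∈ A, τ o = σ i₀) → f (σ i₀) = σ o := by
    intro σ hσ hno
    have hex : ∃ τ ∈ A, τ i₀ = σ i₀ := ⟨σ, hσ, rfl⟩
    have hch := Classical.choose_spec hex
    simp only [hf, dif_neg hno, dif_pos hex]
    rw [AutSG_uniq hrow hch.1 hσ hi₀ hch.2]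
  have fval3 : ∀ i : Fin n, (¬ ∃ σ ∈ A, σ o = i) → (¬ ∃ σ ∈ A, σ i₀ = i) → f i = i := by
    intro i h1 h2
    simp only [hf, dif_neg h1, dif_neg h2]
  -- injectivity
  have hinj : Function.Injective f := by
    intro i j hij
    rcases Classical.em (∃ σ ∈ A, σ o = i) with ⟨σ, hσ, rfl⟩ | hoi
    · rcases Classical.em (∃ τ ∈ A, τ o = j) with ⟨τ, hτ, rfl⟩ | hoj
      · rw [fval1 σ hσ, fval1 τ hτ] at hij
        rw [AutSG_uniq hrow hσ hτ hi₀ hij]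
      · rcases Classical.em (∃ τ ∈ A, τ i₀ = j) with ⟨τ, hτ, rfl⟩ | hij'
        · rw [fval1 σ hσ, fval2 τ hτ (by rintro ⟨ρ, hρ, hρv⟩; exact hoj ⟨ρ, hρ, hρv⟩)] at hij
          -- σ i₀ = τ o, so j = τ i₀ = (τ σ⁻¹ τ) o : contradiction with hoj
          exfalso
          apply hoj
          refine ⟨τ * σ⁻¹ * τ, mul_mem (mul_mem hτ (inv_mem hσ)) hτ, ?_⟩
          rw [Equiv.Perm.mul_apply, Equiv.Perm.mul_apply, ← hij, Equiv.Perm.inv_apply_self]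
        · rw [fval1 σ hσ, fval3 j hoj hij'] at hij
          exact absurd ⟨σ, hσ, hij⟩ hij'
    · rcases Classical.em (∃ σ ∈ A, σ i₀ = i) with ⟨σ, hσ, rfl⟩ | hii
      · have hf2 := fval2 σ hσ (by rintro ⟨ρ, hρ, hρv⟩; exact hoi ⟨ρ, hρ, hρv⟩)
        rcases Classical.em (∃ τ ∈ A, τ o = j) with ⟨τ, hτ, rfl⟩ | hoj
        · rw [hf2, fval1 τ hτ] at hij
          exfalso
          apply hoi
          refine ⟨σ * τ⁻¹ * σ, mul_mem (mul_mem hσ (inv_mem hτ)) hσ, ?_⟩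
          rw [Equiv.Perm.mul_apply, Equiv.Perm.mul_apply, hij, Equiv.Perm.inv_apply_self]
        · rcases Classical.em (∃ τ ∈ A, τ i₀ = j) with ⟨τ, hτ, rfl⟩ | hij'
          · rw [hf2, fval2 τ hτ (by rintro ⟨ρ, hρ, hρv⟩; exact hoj ⟨ρ, hρ, hρv⟩)] at hij
            rw [AutSG_uniq hrow hσ hτ hok hij]
          · rw [hf2, fval3 j hoj hij'] at hij
            exact absurd ⟨σ, hσ, hij⟩ hoj
      · have hf3 := fval3 i hoi hii
        rcases Classical.em (∃ τ ∈ A, τ o = j) with ⟨τ, hτ, rfl⟩ | hoj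
        · rw [hf3, fval1 τ hτ] at hij
          exact absurd ⟨τ, hτ, hij.symm⟩ hii
        · rcases Classical.em (∃ τ ∈ A, τ i₀ = j) with ⟨τ, hτ, rfl⟩ | hij'
          · rw [hf3, fval2 τ hτ (by rintro ⟨ρ, hρ, hρv⟩; exact hoj ⟨ρ, hρ, hρv⟩)] at hij
            exact absurd ⟨τ, hτ, hij.symm⟩ hoi
          · rw [hf3, fval3 j hoj hij'] at hij
            exact hij
  set z : Equiv.Perm (Fin n) := Equiv.ofBijective f (Finite.injective_iff_bijective.mp hinj)
    with hz
  have hzap : ∀ i, z i = f i := fun i => rfl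
  refine ⟨z, ?_, ?_, ?_⟩
  · intro lam hlam
    ext i
    rw [Equiv.Perm.mul_apply, Equiv.Perm.mul_apply, hzap, hzap]
    rcases Classical.em (∃ σ ∈ A, σ o = i) with ⟨σ, hσ, rfl⟩ | hoi
    · have h1 : lam (σ o) = (lam * σ) o := rfl
      rw [h1, fval1 _ (mul_mem hlam hσ), fval1 σ hσ, Equiv.Perm.mul_apply]
    · rcases Classical.em (∃ σ ∈ A, σ i₀ = i) with ⟨σ, hσ, rfl⟩ | hii
      · have hpre : ¬ ∃ τ ∈ A, τ o = σ i₀ := by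
          rintro ⟨ρ, hρ, hρv⟩; exact hoi ⟨ρ, hρ, hρv⟩
        have hpre2 : ¬ ∃ τ ∈ A, τ o = (lam * σ) i₀ := by
          rintro ⟨ρ, hρ, hρv⟩
          apply hoi
          refine ⟨lam⁻¹ * ρ, mul_mem (inv_mem hlam) hρ, ?_⟩
          rw [Equiv.Perm.mul_apply, hρv, Equiv.Perm.mul_apply, Equiv.Perm.inv_apply_self]
        have h1 : lam (σ i₀) = (lam * σ) i₀ := rfl
        rw [h1, fval2 _ (mul_mem hlam hσ) hpre2, fval2 σ hσ hpre, Equiv.Perm.mul_apply]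
      · have h1 : ¬ ∃ σ ∈ A, σ o = lam i := by
          rintro ⟨ρ, hρ, hρv⟩
          apply hoi
          refine ⟨lam⁻¹ * ρ, mul_mem (inv_mem hlam) hρ, ?_⟩
          rw [Equiv.Perm.mul_apply, hρv, Equiv.Perm.inv_apply_self]
        have h2 : ¬ ∃ σ ∈ A, σ i₀ = lam i := by
          rintro ⟨ρ, hρ, hρv⟩
          apply hii
          refine ⟨lam⁻¹ * ρ, mul_mem (inv_mem hlam) hρ, ?_⟩
          rw [Equiv.Perm.mul_apply, hρv, Equiv.Perm.inv_apply_self]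
        rw [fval3 _ h1 h2, fval3 i hoi hii]
  · intro i hi
    rw [hzap]
    refine fval3 i ?_ ?_
    · rintro ⟨σ, hσ, rfl⟩
      exact hi (Iso.lt hσ hok)
    · rintro ⟨σ, hσ, rfl⟩
      exact hi (Iso.lt hσ hi₀)
  · rw [hzap]
    have h1 : f ((1 : Equiv.Perm (Fin n)) o) = (1 : Equiv.Perm (Fin n)) i₀ :=
      fval1 1 (one_mem A)
    simpa using h1

/-- The ambient finite group: compatible families of permutations. -/
def GG (n : ℕ) : Subgroup ((_k : Fin (n + 1)) → (_M : Fin n → Fin n → Fin n) →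
    Equiv.Perm (Fin n)) where
  carrier := {g | (∀ (k : Fin (n + 1)) (M M' : Fin n → Fin n → Fin n) σ,
      Iso (k : ℕ) M M' σ → g k M' = σ * g k M * σ⁻¹) ∧
      ∀ (k : Fin (n + 1)) M (i : Fin n), ¬ (i : ℕ) < (k : ℕ) → g k M i = i}
  one_mem' := by
    constructor
    · intro k M M' σ _
      simp
    · intro k M i _
      simp
  mul_mem' := by
    rintro a b ⟨ha1, ha2⟩ ⟨hb1, hb2⟩
    constructor
    · intro k M M' σ hiso
      have h1 : (a * b) k M' = a k M' * b k M' := rfl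
      have h2 : (a * b) k M = a k M * b k M := rfl
      rw [h1, h2, ha1 k M M' σ hiso, hb1 k M M' σ hiso]
      group
    · intro k M i hi
      have : (a * b) k M i = a k M (b k M i) := rfl
      rw [this, hb2 k M i hi, ha2 k M i hi]
  inv_mem' := by
    rintro a ⟨ha1, ha2⟩
    constructor
    · intro k M M' σ hiso
      have : (a⁻¹) k M' = (a k M')⁻¹ := rfl
      rw [this, ha1 k M M' σ hiso]
      have : (a⁻¹) k M = (a k M)⁻¹ := rfl
      rw [this]
      group
    · intro k M i hi
      have h1 : (a⁻¹) k M = (a k M)⁻¹ := rfl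
      rw [h1]
      nth_rewrite 1 [← ha2 k M i hi]
      exact Equiv.Perm.inv_apply_self _ i
  
lemma GG_pres {g : (_k : Fin (n + 1)) → (_M : Fin n → Fin n → Fin n) → Equiv.Perm (Fin n)}
    (hg : g ∈ GG n) (k : Fin (n + 1)) (M : Fin n → Fin n → Fin n) {i : Fin n}
    (hi : (i : ℕ) < (k : ℕ)) : ((g k M i : Fin n) : ℕ) < (k : ℕ) := by
  by_contra hc
  have h1 : g k M (g k M i) = g k M i := hg.2 k M (g k M i) hc
  have := (g k M).injective h1
  rw [this] at hc
  exact hc hi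

end FinitePart
namespace Words

variable {E F : CBER X} (W : Words E F)
include W

lemma chat_base {x x' : X} (h : E.rel x x') (i j : ℕ) : W.chat x i j = W.chat x' i j := by
  unfold chat
  rw [W.nthw_base h i, W.nthw_base h j, W.rk_base (W.bpt_base h i)]

def KF (x : X) : Fin (W.Nb + 1) := ⟨W.kk x, Nat.lt_succ_of_le (W.kk_le_Nb x)⟩

lemma KF_base {x x' : X} (h : E.rel x x') : W.KF x = W.KF x' := Fin.ext (W.kk_base h)

def cpad (x : X) : Fin W.Nb → Fin W.Nb → Fin W.Nb := fun i j =>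
  if h : (i : ℕ) < W.kk x ∧ (j : ℕ) < W.kk x then
    ⟨W.chat x i j, lt_of_lt_of_le (W.chat_lt_kk x i j) (W.kk_le_Nb x)⟩
  else j

lemma cpad_base {x x' : X} (h : E.rel x x') : W.cpad x = W.cpad x' := by
  funext i j
  unfold cpad
  simp only [W.kk_base h, W.chat_base h]

lemma cpad_rows (x : X) : GoodRows (W.kk x) (W.cpad x) := by
  intro i j j' hi hj hj' heq
  unfold cpad at heq
  rw [dif_pos ⟨hi, hj⟩, dif_pos ⟨hi, hj'⟩] at heq
  have := congrArg Fin.val heq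
  simp only at this
  exact Fin.ext (W.chat_inj hj hj' this)

def rhoFun (x : X) (i : ℕ) : Fin W.Nb → Fin W.Nb := fun j =>
  if h : (j : ℕ) < W.kk x then
    ⟨W.chat x i j, lt_of_lt_of_le (W.chat_lt_kk x i j) (W.kk_le_Nb x)⟩
  else j

lemma rhoFun_inj (x : X) (i : ℕ) : Function.Injective (W.rhoFun x i) := by
  intro j j' heq
  unfold rhoFun at heq
  rcases Classical.em ((j : ℕ) < W.kk x) with hj | hj <;>
    rcases Classical.em ((j' : ℕ) < W.kk x) with hj' | hj'
  · rw [dif_pos hj, dif_pos hj'] at heq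
    have := congrArg Fin.val heq
    simp only at this
    exact Fin.ext (W.chat_inj hj hj' this)
  · rw [dif_pos hj, dif_neg hj'] at heq
    exfalso
    apply hj'
    rw [← heq]
    exact lt_of_lt_of_le (W.chat_lt_kk x i j) (le_refl _) |>.trans_le (le_refl _) |>.trans_le
      (le_of_eq rfl)
  · rw [dif_neg hj, dif_pos hj'] at heq
    exfalso
    apply hj
    rw [heq]
    exact W.chat_lt_kk x i j'
  · rw [dif_neg hj, dif_neg hj'] at heq
    exact heq

def rho (x : X) (i : ℕ) : Equiv.Perm (Fin W.Nb) :=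
  Equiv.ofBijective _ (Finite.injective_iff_bijective.mp (W.rhoFun_inj x i))

lemma rho_apply (x : X) (i : ℕ) (j : Fin W.Nb) :
    W.rho x i j = W.rhoFun x i j := rfl

lemma rho_apply_lt (x : X) (i : ℕ) {j : Fin W.Nb} (hj : (j : ℕ) < W.kk x) :
    W.rho x i j = ⟨W.chat x i j, lt_of_lt_of_le (W.chat_lt_kk x i j) (W.kk_le_Nb x)⟩ := by
  rw [rho_apply]
  unfold rhoFun
  rw [dif_pos hj]

lemma Iso_rho {x : X} {i : ℕ} (hi : i < W.kk x) :
    Iso (W.kk x) (W.cpad x) (W.cpad (W.bpt x i)) (W.rho x i) := by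
  constructor
  · intro a b ha hb
    rw [W.rho_apply_lt x i ha, W.rho_apply_lt x i hb]
    unfold cpad
    rw [W.kk_bpt x i]
    rw [dif_pos ⟨W.chat_lt_kk x i a, W.chat_lt_kk x i b⟩, dif_pos ⟨ha, hb⟩]
    exact Fin.ext (W.chat_coh hi ha hb)
  · intro j hj
    rw [rho_apply]
    unfold rhoFun
    rw [dif_neg hj]

def ozero : Fin W.Nb := ⟨0, W.Nbpos⟩

def zg (g : ↥(GG W.Nb)) (x : X) : Equiv.Perm (Fin W.Nb) := g.1 (W.KF x) (W.cpad x)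

def jdx (g : ↥(GG W.Nb)) (x : X) : ℕ := ((W.zg g x) (W.ozero) : Fin W.Nb)

def nu (g : ↥(GG W.Nb)) (x : X) : ℕ := W.nthw x (W.jdx g x)

def Tmap (g : ↥(GG W.Nb)) (x : X) : X := W.u (W.nu g x) x

lemma jdx_lt (g : ↥(GG W.Nb)) (x : X) : W.jdx g x < W.kk x :=
  GG_pres g.2 (W.KF x) (W.cpad x) (i := W.ozero) (W.kk_pos x)

lemma zg_base (g : ↥(GG W.Nb)) {x x' : X} (h : E.rel x x') : W.zg g x = W.zg g x' := by
  unfold zg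
  rw [W.KF_base h, W.cpad_base h]

lemma jdx_base (g : ↥(GG W.Nb)) {x x' : X} (h : E.rel x x') : W.jdx g x = W.jdx g x' := by
  unfold jdx
  rw [W.zg_base g h]

lemma nu_base (g : ↥(GG W.Nb)) {x x' : X} (h : E.rel x x') : W.nu g x = W.nu g x' := by
  unfold nu
  rw [W.jdx_base g h, W.nthw_base h]

lemma Tmap_bpt (g : ↥(GG W.Nb)) (x : X) : W.Tmap g x = W.bpt x (W.jdx g x) := rfl

lemma zg_one (x : X) : W.zg 1 x = 1 := rfl

lemma zg_mul (g h : ↥(GG W.Nb)) (x : X) : W.zg (g * h) x = W.zg g x * W.zg h x := rfl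

lemma zg_inv (g : ↥(GG W.Nb)) (x : X) : W.zg g⁻¹ x = (W.zg g x)⁻¹ := rfl

lemma Tmap_one (x : X) : W.Tmap 1 x = x := by
  have h1 : W.jdx 1 x = 0 := rfl
  unfold Tmap nu
  rw [h1, W.nthw_zero, W.u0]

lemma Tmap_mul (g h : ↥(GG W.Nb)) (x : X) :
    E.rel (W.Tmap (g * h) x) (W.Tmap g (W.Tmap h x)) := by
  have hi : W.jdx h x < W.kk x := W.jdx_lt h x
  have hky : W.kk (W.bpt x (W.jdx h x)) = W.kk x := W.kk_bpt x _
  set i := W.jdx h x with hidef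
  set y := W.bpt x i with hy
  have hKF : W.KF y = W.KF x := Fin.ext hky
  have hcomp : W.zg g y = W.rho x i * W.zg g x * (W.rho x i)⁻¹ := by
    unfold zg
    rw [hKF, W.cpad_base (E.iseqv.refl y)]
    exact g.2.1 (W.KF x) (W.cpad x) (W.cpad y) (W.rho x i) (W.Iso_rho hi)
  set ifin : Fin W.Nb := ⟨i, lt_of_lt_of_le hi (W.kk_le_Nb x)⟩ with hifin
  have hrho_i : W.rho x i ifin = W.ozero := by
    rw [W.rho_apply_lt x i (show (ifin : ℕ) < W.kk x from hi)]
    exact Fin.ext (W.chat_diag x i)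
  have hrhoinv : (W.rho x i)⁻¹ W.ozero = ifin := by
    rw [← hrho_i, Equiv.Perm.inv_apply_self]
  set c : Fin W.Nb := W.zg g x ifin with hc
  have hclt : (c : ℕ) < W.kk x :=
    GG_pres g.2 (W.KF x) (W.cpad x) (i := ifin) hi
  have hjdxy : W.jdx g y = W.chat x i (c : ℕ) := by
    unfold jdx
    rw [hcomp, Equiv.Perm.mul_apply, Equiv.Perm.mul_apply, hrhoinv, ← hc,
      W.rho_apply_lt x i hclt]
  have hzh : W.zg h x W.ozero = ifin := Fin.ext rfl
  have hjdxgh : W.jdx (g * h) x = (c : ℕ) := by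
    unfold jdx
    rw [W.zg_mul, Equiv.Perm.mul_apply, hzh, ← hc]
  have hcorr := W.bpt_corr (x := x) (i := i) (j := (c : ℕ)) hclt
  have hTgh : W.Tmap (g * h) x = W.u (W.nthw x (c : ℕ)) x := by
    unfold Tmap nu
    rw [hjdxgh]
  have hTgy : W.Tmap g y = W.u (W.nthw y (W.chat x i (c : ℕ))) y := by
    unfold Tmap nu
    rw [hjdxy]
  rw [show W.Tmap h x = y from rfl, hTgh, hTgy]
  exact E.iseqv.symm hcorr

lemma Epres (g : ↥(GG W.Nb)) {x y : X} (h : E.rel x y) :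
    E.rel (W.Tmap g x) (W.Tmap g y) := by
  unfold Tmap
  rw [← W.nu_base g h]
  exact W.uE _ h

lemma Tmap_inv_cancel (g : ↥(GG W.Nb)) (x : X) :
    E.rel (W.Tmap g⁻¹ (W.Tmap g x)) x := by
  have h1 := W.Tmap_mul g⁻¹ g x
  rw [inv_mul_cancel, W.Tmap_one] at h1
  exact E.iseqv.symm h1

lemma Tmap_E_iff (g : ↥(GG W.Nb)) (x y : X) :
    E.rel (W.Tmap g x) (W.Tmap g y) ↔ E.rel x y := by
  constructor
  · intro h
    have h2 := W.Epres g⁻¹ h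
    exact E.iseqv.trans (E.iseqv.trans (E.iseqv.symm (W.Tmap_inv_cancel g x)) h2)
      (W.Tmap_inv_cancel g y)
  · exact W.Epres g

def Tinv (g : ↥(GG W.Nb)) (z : X) : X := (W.u (W.nu g (W.Tmap g⁻¹ z))).symm z

lemma Tmap_Tinv (g : ↥(GG W.Nb)) (z : X) : W.Tmap g (W.Tinv g z) = z := by
  set x₀ := W.Tmap g⁻¹ z with hx₀
  set m := W.nu g x₀ with hm
  have h1 : E.rel z (W.Tmap g x₀) := by
    have := W.Tmap_mul g g⁻¹ z
    rwa [mul_inv_cancel, W.Tmap_one] at this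
  have hTx₀ : W.Tmap g x₀ = W.u m x₀ := rfl
  have hxx₀ : E.rel ((W.u m).symm z) x₀ := by
    have h2 := W.uEs m h1
    rw [hTx₀, Equiv.symm_apply_apply] at h2
    exact h2
  have hν : W.nu g ((W.u m).symm z) = m := W.nu_base g hxx₀
  show W.Tmap g ((W.u m).symm z) = z
  unfold Tmap
  rw [hν, Equiv.apply_symm_apply]

lemma Tinv_Tmap (g : ↥(GG W.Nb)) (x : X) : W.Tinv g (W.Tmap g x) = x := by
  have h1 : E.rel (W.Tmap g⁻¹ (W.Tmap g x)) x := W.Tmap_inv_cancel g x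
  have h2 : W.nu g (W.Tmap g⁻¹ (W.Tmap g x)) = W.nu g x := W.nu_base g h1
  unfold Tinv
  rw [h2]
  exact Equiv.symm_apply_apply _ _

def TEq (g : ↥(GG W.Nb)) : X ≃ X where
  toFun := W.Tmap g
  invFun := W.Tinv g
  left_inv := W.Tinv_Tmap g
  right_inv := W.Tmap_Tinv g

lemma Tgen (x y : X) : F.rel x y ↔ ∃ g : ↥(GG W.Nb), E.rel (W.Tmap g x) y := by
  constructor
  · intro h
    obtain ⟨m₀, hm₀⟩ := (W.gen x y).mp h
    have hi₀ : W.rk x m₀ < W.kk x := W.rk_lt_kk x m₀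
    obtain ⟨z, hzc, hzd, hz0⟩ := CT (M := W.cpad x) W.Nbpos (W.cpad_rows x) (W.kk_pos x)
      ⟨W.rk x m₀, lt_of_lt_of_le hi₀ (W.kk_le_Nb x)⟩ hi₀
    set gfun : (_k : Fin (W.Nb + 1)) → (_M : Fin W.Nb → Fin W.Nb → Fin W.Nb) →
        Equiv.Perm (Fin W.Nb) := fun k M =>
      if _hk : (k : ℕ) = W.kk x then
        (if hM : ∃ σ, Iso (W.kk x) (W.cpad x) M σ then
          Classical.choose hM * z * (Classical.choose hM)⁻¹ else 1)
      else 1 with hgfun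
    have hmem : gfun ∈ GG W.Nb := by
      constructor
      · intro k M M' σ hiso
        rcases Classical.em ((k : ℕ) = W.kk x) with hk | hk
        · have hiso' : Iso (W.kk x) M M' σ := by rwa [hk] at hiso
          simp only [hgfun, dif_pos hk]
          rcases Classical.em (∃ σ', Iso (W.kk x) (W.cpad x) M σ') with hM | hM
          · have hM' : ∃ σ', Iso (W.kk x) (W.cpad x) M' σ' :=
              ⟨σ * Classical.choose hM, Iso.trans (Classical.choose_spec hM) hiso'⟩
            rw [dif_pos hM, dif_pos hM']
            set σ₀ := Classical.choose hM with hσ₀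
            set σ' := Classical.choose hM' with hσ'
            have hβ : (σ')⁻¹ * (σ * σ₀) ∈ AutSG (W.kk x) (W.cpad x) := by
              rw [mem_AutSG]
              have t1 : Iso (W.kk x) (W.cpad x) M' (σ * σ₀) :=
                Iso.trans (Classical.choose_spec hM) hiso'
              have t2 : Iso (W.kk x) M' (W.cpad x) (σ')⁻¹ :=
                Iso.symm (Classical.choose_spec hM')
              have := Iso.trans t1 t2
              exact this
            have h3 : z * ((σ')⁻¹ * (σ * σ₀)) = ((σ')⁻¹ * (σ * σ₀)) * z := hzc _ hβ
            have h5 : σ' * z * (σ')⁻¹ =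
                σ' * (z * ((σ')⁻¹ * (σ * σ₀))) * (σ * σ₀)⁻¹ := by group
            rw [h5, h3]
            group
          · have hM' : ¬ ∃ σ', Iso (W.kk x) (W.cpad x) M' σ' := by
              rintro ⟨σ'', h''⟩
              exact hM ⟨σ⁻¹ * σ'', Iso.trans h'' (Iso.symm hiso')⟩
            rw [dif_neg hM, dif_neg hM']
            group
        · simp only [hgfun, dif_neg hk]
          group
      · intro k M i hi
        rcases Classical.em ((k : ℕ) = W.kk x) with hk | hk
        · simp only [hgfun, dif_pos hk]
          rw [hk] at hi
          rcases Classical.em (∃ σ', Iso (W.kk x) (W.cpad x) M σ') with hM | hM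
          · rw [dif_pos hM]
            have hspec := Classical.choose_spec hM
            rw [Equiv.Perm.mul_apply, Equiv.Perm.mul_apply]
            rw [(Iso.symm hspec).2 i hi, hzd i hi, hspec.2 i hi]
          · rw [dif_neg hM]
            rfl
        · simp only [hgfun, dif_neg hk]
          rfl
    set g : ↥(GG W.Nb) := ⟨gfun, hmem⟩ with hgdef
    refine ⟨g, ?_⟩
    have hzg : W.zg g x = z := by
      have hMx : ∃ σ', Iso (W.kk x) (W.cpad x) (W.cpad x) σ' := ⟨1, Iso.one _ _⟩
      have h1 : W.zg g x = gfun (W.KF x) (W.cpad x) := rfl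
      have hkKF : ((W.KF x : Fin (W.Nb+1)) : ℕ) = W.kk x := rfl
      rw [h1]
      simp only [hgfun, dif_pos hkKF, dif_pos hMx]
      have hσ₀ : Classical.choose hMx ∈ AutSG (W.kk x) (W.cpad x) :=
        Classical.choose_spec hMx
      have := hzc _ hσ₀
      -- choose * z * choose⁻¹ = z
      rw [← this]
      group
    have hjdx : W.jdx g x = W.rk x m₀ := by
      unfold jdx
      rw [hzg]
      have : W.ozero = (⟨0, W.Nbpos⟩ : Fin W.Nb) := rfl
      rw [this, hz0]
    have hE : E.rel (W.Tmap g x) (W.u m₀ x) := by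
      have h1 : W.Tmap g x = W.u (W.nthw x (W.rk x m₀)) x := by
        unfold Tmap nu
        rw [hjdx]
      rw [h1]
      apply W.rk_congr.mp
      rw [W.rk_nthw hi₀]
    exact E.iseqv.trans hE hm₀
  · rintro ⟨g, hg⟩
    exact F.iseqv.trans (W.F_all x (W.nu g x)) (W.E_le_F hg)

end Words

lemma meas_bind {α : Type} [Countable α] {h : X → α}
    (hh : ∀ a, MeasurableSet {x | h x = a}) {S : α → Set X}
    (hS : ∀ a, MeasurableSet (S a)) : MeasurableSet {x | x ∈ S (h x)} := by
  have heq : {x | x ∈ S (h x)} = ⋃ a, {x | h x = a} ∩ S a := by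
    ext x
    simp only [Set.mem_setOf_eq, Set.mem_iUnion, Set.mem_inter_iff]
    constructor
    · intro hx
      exact ⟨h x, rfl, hx⟩
    · rintro ⟨a, ha, hx⟩
      rw [ha]
      exact hx
  rw [heq]
  exact MeasurableSet.iUnion fun a => (hh a).inter (hS a)

lemma meas_sInf {S : X → Set ℕ} (hS : ∀ b : ℕ, MeasurableSet {x | b ∈ S x}) (a : ℕ) :
    MeasurableSet {x | sInf (S x) = a} := by
  have hset : {x | sInf (S x) = a}
      = {x | (a ∈ S x ∨ (a = 0 ∧ ∀ b, b ∉ S x)) ∧ ∀ b < a, b ∉ S x} := by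
    ext x
    simp only [Set.mem_setOf_eq]
    constructor
    · intro h
      constructor
      · rcases (S x).eq_empty_or_nonempty with he | hne
        · refine Or.inr ⟨by rw [← h, he, Nat.sInf_empty], fun b hb => by rw [he] at hb; exact hb⟩
        · exact Or.inl (h ▸ Nat.sInf_mem hne)
      · intro b hb
        rw [← h] at hb
        exact Nat.notMem_of_lt_sInf hb
    · rintro ⟨h1 | ⟨rfl, h2⟩, h3⟩
      · refine le_antisymm (Nat.sInf_le h1) ?_
        by_contra hlt
        push_neg at hlt
        exact h3 _ hlt (Nat.sInf_mem ⟨a, h1⟩)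
      · rw [Set.eq_empty_iff_forall_notMem.mpr h2, Nat.sInf_empty]
  by_cases ha : a = 0
  · subst ha
    have e2 : {x | (0 ∈ S x ∨ (0 = 0 ∧ ∀ b, b ∉ S x)) ∧ ∀ b < 0, b ∉ S x}
        = {x | 0 ∈ S x} ∪ ⋂ b, {x | b ∈ S x}ᶜ := by
      ext x
      simp only [Set.mem_setOf_eq, Set.mem_union, Set.mem_iInter, Set.mem_compl_iff]
      constructor
      · rintro ⟨h1 | ⟨-, h2⟩, -⟩
        · exact Or.inl h1
        · exact Or.inr h2
      · rintro (h1 | h2)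
        · exact ⟨Or.inl h1, fun b hb => absurd hb (Nat.not_lt_zero b)⟩
        · exact ⟨Or.inr ⟨by trivial, h2⟩, fun b hb => absurd hb (Nat.not_lt_zero b)⟩
    rw [hset, e2]
    exact (hS 0).union (MeasurableSet.iInter fun b => (hS b).compl)
  · have e2 : {x | (a ∈ S x ∨ (a = 0 ∧ ∀ b, b ∉ S x)) ∧ ∀ b < a, b ∉ S x}
        = {x | a ∈ S x} ∩ ⋂ b, ⋂ (_ : b < a), {x | b ∈ S x}ᶜ := by
      ext x
      simp only [Set.mem_setOf_eq, Set.mem_inter_iff, Set.mem_iInter, Set.mem_compl_iff]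
      constructor
      · rintro ⟨h1 | ⟨h0, -⟩, h3⟩
        · exact ⟨h1, h3⟩
        · exact absurd h0 ha
      · rintro ⟨h1, h3⟩
        exact ⟨Or.inl h1, h3⟩
    rw [hset, e2]
    exact (hS a).inter
      (MeasurableSet.iInter fun b => MeasurableSet.iInter fun _ => (hS b).compl)

namespace Words

variable {E F : CBER X} (W : Words E F)
include W

lemma meas_pair (a b : ℕ) : MeasurableSet {x : X | E.rel (W.u a x) (W.u b x)} := by
  have hm : Measurable fun x : X => (W.u a x, W.u b x) :=
    ((W.aut a).1).prodMk ((W.aut b).1)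
  exact hm E.meas

lemma mf_fd (m a : ℕ) : MeasurableSet {x : X | W.fd x m = a} :=
  meas_sInf (fun b => W.meas_pair b m) a

lemma mf_isNew (a : ℕ) : MeasurableSet {x : X | W.isNew x a} := W.mf_fd a a

lemma cnt_succ (x : X) (a : ℕ) :
    W.cnt x (a + 1) = W.cnt x a + (if W.isNew x a then 1 else 0) := by
  unfold cnt
  rw [Finset.range_add_one, Finset.filter_insert]
  rcases Classical.em (W.isNew x a) with h | h
  · rw [if_pos h, if_pos h, Finset.card_insert_of_notMem (by simp)]
  · rw [if_neg h, if_neg h, Nat.add_zero]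

lemma mf_cnt (a : ℕ) : ∀ c, MeasurableSet {x : X | W.cnt x a = c} := by
  induction a with
  | zero =>
    intro c
    rcases Classical.em (c = 0) with rfl | hc
    · have h1 : {x : X | W.cnt x 0 = 0} = Set.univ := by
        ext x; simp [W.cnt_zero]
      rw [h1]; exact MeasurableSet.univ
    · have h1 : {x : X | W.cnt x 0 = c} = ∅ := by
        ext x
        simp only [Set.mem_setOf_eq, W.cnt_zero, Set.mem_empty_iff_false, iff_false]
        exact fun h => hc h.symm
      rw [h1]; exact MeasurableSet.empty
  | succ a IH =>
    intro c
    have hset : {x : X | W.cnt x (a + 1) = c} =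
        ({x | W.isNew x a} ∩ {x | W.cnt x a + 1 = c}) ∪
        ({x | W.isNew x a}ᶜ ∩ {x | W.cnt x a = c}) := by
      ext x
      simp only [Set.mem_setOf_eq, Set.mem_union, Set.mem_inter_iff, Set.mem_compl_iff,
        W.cnt_succ x a]
      rcases Classical.em (W.isNew x a) with h | h <;> simp [h]
    rw [hset]
    have m1 : MeasurableSet {x : X | W.cnt x a + 1 = c} := by
      rcases c with _ | c'
      · have h1 : {x : X | W.cnt x a + 1 = 0} = ∅ := by ext x; simp
        rw [h1]; exact MeasurableSet.empty
      · have h1 : {x : X | W.cnt x a + 1 = c' + 1} = {x | W.cnt x a = c'} := by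
          ext x; simp
        rw [h1]; exact IH c'
    exact ((W.mf_isNew a).inter m1).union (((W.mf_isNew a).compl).inter (IH c))

lemma mf_rk (m r : ℕ) : MeasurableSet {x : X | W.rk x m = r} :=
  meas_bind (h := fun x => W.fd x m) (W.mf_fd m)
    (S := fun a => {x | W.cnt x a = r}) (fun a => W.mf_cnt a r)

lemma mf_kk (j : ℕ) : MeasurableSet {x : X | W.kk x = j} := by
  apply meas_sInf
  intro b
  have h1 : {x : X | b ∈ {j | ∀ m, W.rk x m < j}} = ⋂ m, ⋃ r, ⋃ (_ : r < b),
      {x : X | W.rk x m = r} := by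
    ext x
    simp only [Set.mem_setOf_eq, Set.mem_iInter, Set.mem_iUnion]
    constructor
    · intro h m
      exact ⟨W.rk x m, h m, rfl⟩
    · rintro h m
      obtain ⟨r, hr, hxr⟩ := h m
      rw [hxr]
      exact hr
  rw [h1]
  exact MeasurableSet.iInter fun m => MeasurableSet.iUnion fun r =>
    MeasurableSet.iUnion fun _ => W.mf_rk m r

lemma mf_nthw (j a : ℕ) : MeasurableSet {x : X | W.nthw x j = a} := by
  apply meas_sInf
  intro b
  have h1 : {x : X | b ∈ {a | W.isNew x a ∧ W.cnt x a = j}}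
      = {x | W.isNew x b} ∩ {x | W.cnt x b = j} := rfl
  rw [h1]
  exact (W.mf_isNew b).inter (W.mf_cnt b j)

lemma mf_chat (i j r : ℕ) : MeasurableSet {x : X | W.chat x i j = r} := by
  have hh : ∀ p : ℕ × ℕ, MeasurableSet {x : X | (W.nthw x i, W.nthw x j) = p} := by
    intro p
    have h1 : {x : X | (W.nthw x i, W.nthw x j) = p}
        = {x | W.nthw x i = p.1} ∩ {x | W.nthw x j = p.2} := by
      ext x
      simp [Prod.ext_iff]
    rw [h1]
    exact (W.mf_nthw i p.1).inter (W.mf_nthw j p.2)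
  have key := meas_bind (h := fun x => (W.nthw x i, W.nthw x j)) hh
    (S := fun p => (W.u p.1) ⁻¹' {y | W.rk y (W.cmp p.2 (W.inv p.1)) = r})
    (fun p => (W.aut p.1).1 (W.mf_rk _ r))
  exact key

lemma mf_cpad_entry (i j v : Fin W.Nb) : MeasurableSet {x : X | W.cpad x i j = v} := by
  have key : ∀ x : X, (W.cpad x i j = v) ↔ x ∈ (fun k₀ => if (i : ℕ) < k₀ ∧ (j : ℕ) < k₀
      then {x' : X | W.chat x' (i : ℕ) (j : ℕ) = (v : ℕ)}
      else {_x' : X | j = v}) (W.kk x) := by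
    intro x
    show W.cpad x i j = v ↔ x ∈ (if (i : ℕ) < W.kk x ∧ (j : ℕ) < W.kk x
      then {x' : X | W.chat x' (i : ℕ) (j : ℕ) = (v : ℕ)}
      else {_x' : X | j = v})
    unfold cpad
    rcases Classical.em ((i : ℕ) < W.kk x ∧ (j : ℕ) < W.kk x) with h | h
    · rw [dif_pos h, if_pos h]
      simp only [Set.mem_setOf_eq]
      constructor
      · intro hv
        exact congrArg Fin.val hv
      · intro hv
        exact Fin.ext hv
    · rw [dif_neg h, if_neg h]
      exact Iff.rfl
  have hS : ∀ k₀ : ℕ, MeasurableSet ((fun k₀ => if (i : ℕ) < k₀ ∧ (j : ℕ) < k₀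
      then {x' : X | W.chat x' (i : ℕ) (j : ℕ) = (v : ℕ)}
      else {_x' : X | j = v}) k₀) := by
    intro k₀
    show MeasurableSet (if (i : ℕ) < k₀ ∧ (j : ℕ) < k₀
      then {x' : X | W.chat x' (i : ℕ) (j : ℕ) = (v : ℕ)}
      else {_x' : X | j = v})
    by_cases h : (i : ℕ) < k₀ ∧ (j : ℕ) < k₀
    · rw [if_pos h]
      exact W.mf_chat i j v
    · rw [if_neg h]
      exact MeasurableSet.const _
  have hset : {x : X | W.cpad x i j = v} = {x | x ∈ (fun k₀ =>
      if (i : ℕ) < k₀ ∧ (j : ℕ) < k₀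
      then {x' : X | W.chat x' (i : ℕ) (j : ℕ) = (v : ℕ)}
      else {_x' : X | j = v}) (W.kk x)} := Set.ext key
  rw [hset]
  exact meas_bind (h := fun x => W.kk x) W.mf_kk hS

lemma mf_pad (p : Fin (W.Nb + 1) × (Fin W.Nb → Fin W.Nb → Fin W.Nb)) :
    MeasurableSet {x : X | (W.KF x, W.cpad x) = p} := by
  have h1 : {x : X | (W.KF x, W.cpad x) = p}
      = {x | W.kk x = (p.1 : ℕ)} ∩ ⋂ i, ⋂ j, {x | W.cpad x i j = p.2 i j} := by
    ext x
    simp only [Set.mem_setOf_eq, Set.mem_inter_iff, Set.mem_iInter, Prod.ext_iff]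
    constructor
    · rintro ⟨h1, h2⟩
      exact ⟨congrArg Fin.val h1, fun i j => by rw [h2]⟩
    · rintro ⟨h1, h2⟩
      refine ⟨Fin.ext h1, ?_⟩
      funext i j
      exact h2 i j
  rw [h1]
  exact (W.mf_kk _).inter (MeasurableSet.iInter fun i => MeasurableSet.iInter fun j =>
    W.mf_cpad_entry i j _)

lemma mf_jdx (g : ↥(GG W.Nb)) (i : ℕ) : MeasurableSet {x : X | W.jdx g x = i} := by
  have key := meas_bind (h := fun x => (W.KF x, W.cpad x)) W.mf_pad
    (S := fun p => {_x : X | ((g.1 p.1 p.2 ⟨0, W.Nbpos⟩ : Fin W.Nb) : ℕ) = i})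
    (fun p => MeasurableSet.const _)
  exact key

lemma mf_nu (g : ↥(GG W.Nb)) (n₀ : ℕ) : MeasurableSet {x : X | W.nu g x = n₀} := by
  have key := meas_bind (h := fun x => W.jdx g x) (W.mf_jdx g)
    (S := fun i => {x : X | W.nthw x i = n₀})
    (fun i => W.mf_nthw i n₀)
  exact key

lemma meas_Tmap (g : ↥(GG W.Nb)) : Measurable (W.Tmap g) := by
  intro t ht
  have h1 : W.Tmap g ⁻¹' t = ⋃ n, {x | W.nu g x = n} ∩ W.u n ⁻¹' t := by
    ext x
    simp only [Set.mem_preimage, Set.mem_iUnion, Set.mem_inter_iff, Set.mem_setOf_eq]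
    constructor
    · intro hx
      exact ⟨W.nu g x, rfl, hx⟩
    · rintro ⟨n, hn, hx⟩
      show W.u (W.nu g x) x ∈ t
      rw [hn]
      exact hx
  rw [h1]
  exact MeasurableSet.iUnion fun n => (W.mf_nu g n).inter ((W.aut n).1 ht)

lemma mf_hinv (g : ↥(GG W.Nb)) (n : ℕ) :
    MeasurableSet {z : X | W.nu g (W.Tmap g⁻¹ z) = n} := by
  have key := meas_bind (h := fun z => W.nu g⁻¹ z) (W.mf_nu g⁻¹)
    (S := fun m => (W.u m) ⁻¹' {y : X | W.nu g y = n})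
    (fun m => (W.aut m).1 (W.mf_nu g n))
  exact key

lemma meas_Tinv (g : ↥(GG W.Nb)) : Measurable (W.Tinv g) := by
  intro t ht
  have h1 : W.Tinv g ⁻¹' t
      = ⋃ n, {z | W.nu g (W.Tmap g⁻¹ z) = n} ∩ (W.u n).symm ⁻¹' t := by
    ext z
    simp only [Set.mem_preimage, Set.mem_iUnion, Set.mem_inter_iff, Set.mem_setOf_eq]
    constructor
    · intro hz
      exact ⟨W.nu g (W.Tmap g⁻¹ z), rfl, hz⟩
    · rintro ⟨n, hn, hz⟩
      show (W.u (W.nu g (W.Tmap g⁻¹ z))).symm z ∈ t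
      rw [hn]
      exact hz
  rw [h1]
  exact MeasurableSet.iUnion fun n => (W.mf_hinv g n).inter ((W.aut n).2.1 ht)

lemma TEq_isAut (g : ↥(GG W.Nb)) : IsAut E (W.TEq g) :=
  ⟨W.meas_Tmap g, W.meas_Tinv g, W.Tmap_E_iff g⟩

end Words

section Assembly

variable {E F : CBER X}

def step (T : ℕ → X ≃ X) (p : ℕ × Bool) : X ≃ X := if p.2 then T p.1 else (T p.1).symm

def wmap (T : ℕ → X ≃ X) : List (ℕ × Bool) → X ≃ X
  | [] => Equiv.refl X
  | p :: l => (step T p).trans (wmap T l)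

lemma wmap_append (T : ℕ → X ≃ X) (l₁ l₂ : List (ℕ × Bool)) (x : X) :
    wmap T (l₁ ++ l₂) x = wmap T l₂ (wmap T l₁ x) := by
  induction l₁ generalizing x with
  | nil => rfl
  | cons p l IH =>
    show wmap T (l ++ l₂) (step T p x) = wmap T l₂ (wmap T l (step T p x))
    exact IH (step T p x)

def invWord (l : List (ℕ × Bool)) : List (ℕ × Bool) := (l.map (fun p => (p.1, !p.2))).reverse

lemma step_flip (T : ℕ → X ≃ X) (p : ℕ × Bool) (x : X) :
    step T (p.1, !p.2) x = (step T p).symm x := by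
  rcases p with ⟨n, b⟩
  cases b <;> simp [step]

lemma wmap_invWord (T : ℕ → X ≃ X) (l : List (ℕ × Bool)) (x : X) :
    wmap T (invWord l) x = (wmap T l).symm x := by
  induction l generalizing x with
  | nil => rfl
  | cons p l IH =>
    have h1 : invWord (p :: l) = invWord l ++ [(p.1, !p.2)] := by simp [invWord]
    rw [h1, wmap_append]
    have h2 : wmap T [(p.1, !p.2)] (wmap T (invWord l) x) =
        step T (p.1, !p.2) (wmap T (invWord l) x) := rfl
    rw [h2, IH, step_flip]
    rfl

lemma isAut_refl : IsAut E (Equiv.refl X) := ⟨measurable_id, measurable_id, fun _ _ => Iff.rfl⟩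

lemma isAut_symm (e : X ≃ X) (h : IsAut E e) : IsAut E e.symm := by
  refine ⟨h.2.1, ?_, ?_⟩
  · simpa using h.1
  · intro x y
    have h2 := h.2.2 (e.symm x) (e.symm y)
    simpa using h2.symm

lemma isAut_trans (e e' : X ≃ X) (h : IsAut E e) (h' : IsAut E e') : IsAut E (e.trans e') := by
  refine ⟨?_, ?_, ?_⟩
  · exact h'.1.comp h.1
  · exact h.2.1.comp h'.2.1
  · intro x y
    exact (h'.2.2 (e x) (e y)).trans (h.2.2 x y)

lemma wmap_isAut (T : ℕ → X ≃ X) (hT : ∀ n, IsAut E (T n)) (l : List (ℕ × Bool)) :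
    IsAut E (wmap T l) := by
  induction l with
  | nil => exact isAut_refl
  | cons p l IH =>
    refine isAut_trans _ _ ?_ IH
    rcases p with ⟨n, b⟩
    cases b
    · exact isAut_symm _ (hT n)
    · exact hT n

lemma normal_words (T : ℕ → X ≃ X) (hT : ∀ n, IsAut E (T n))
    (hgen : ∀ x y, F.rel x y ↔
      Relation.EqvGen (fun u v => E.rel u v ∨ ∃ n, T n u = v) x y) :
    ∀ x y, F.rel x y ↔ ∃ l, E.rel (wmap T l x) y := by
  intro x y
  rw [hgen]
  constructor
  · intro h
    induction h with
    | rel a b hab =>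
      rcases hab with hE | ⟨n, rfl⟩
      · exact ⟨[], hE⟩
      · exact ⟨[(n, true)], E.iseqv.refl _⟩
    | refl a => exact ⟨[], E.iseqv.refl a⟩
    | symm a b _ IH =>
      obtain ⟨l, hl⟩ := IH
      refine ⟨invWord l, ?_⟩
      have haut := wmap_isAut T hT (invWord l)
      have h2 : E.rel (wmap T (invWord l) (wmap T l a)) (wmap T (invWord l) b) :=
        (haut.2.2 _ _).mpr hl
      rw [wmap_invWord, Equiv.symm_apply_apply, wmap_invWord] at h2
      rw [wmap_invWord]
      exact E.iseqv.symm h2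
    | trans a b c _ _ IH1 IH2 =>
      obtain ⟨l, hl⟩ := IH1
      obtain ⟨l', hl'⟩ := IH2
      refine ⟨l ++ l', ?_⟩
      rw [wmap_append]
      have haut := wmap_isAut T hT l'
      have h2 : E.rel (wmap T l' (wmap T l a)) (wmap T l' b) := (haut.2.2 _ _).mpr hl
      exact E.iseqv.trans h2 hl'
  · rintro ⟨l, hl⟩
    have hx : ∀ (l : List (ℕ × Bool)) (x : X),
        Relation.EqvGen (fun u v => E.rel u v ∨ ∃ n, T n u = v) x (wmap T l x) := by
      intro l
      induction l with
      | nil => intro x; exact Relation.EqvGen.refl x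
      | cons p l IH =>
        intro x
        have h1 : Relation.EqvGen (fun u v => E.rel u v ∨ ∃ n, T n u = v) x (step T p x) := by
          rcases p with ⟨n, b⟩
          cases b
          · exact Relation.EqvGen.symm _ _
              (Relation.EqvGen.rel _ _ (Or.inr ⟨n, by simp [step]⟩))
          · exact Relation.EqvGen.rel _ _ (Or.inr ⟨n, rfl⟩)
        exact Relation.EqvGen.trans _ _ _ h1 (IH (step T p x))
    exact Relation.EqvGen.trans _ _ _ (hx l x) (Relation.EqvGen.rel _ _ (Or.inl hl))

lemma exists_words (hn : NormalIn E F) (hbi : BoundedIndex E F) : Nonempty (Words E F) := by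
  obtain ⟨T, hTaut, hTgen⟩ := hn
  obtain ⟨Nc, hNc⟩ := hbi
  obtain ⟨s0, hs0⟩ := exists_surjective_nat (List (ℕ × Bool))
  set enum : ℕ → List (ℕ × Bool) := fun n => match n with
    | 0 => []
    | (m + 1) => s0 m
    with henumdef
  have henum : ∀ l, ∃ n, enum n = l := by
    intro l
    obtain ⟨m, hm⟩ := hs0 l
    exact ⟨m + 1, hm⟩
  have hchar := normal_words T hTaut hTgen
  set u : ℕ → X ≃ X := fun m => wmap T (enum m) with hu
  have hgen : ∀ x y, F.rel x y ↔ ∃ m, E.rel (u m x) y := by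
    intro x y
    rw [hchar]
    constructor
    · rintro ⟨l, hl⟩
      obtain ⟨m, rfl⟩ := henum l
      exact ⟨m, hl⟩
    · rintro ⟨m, hm⟩
      exact ⟨enum m, hm⟩
  refine ⟨⟨u, fun x => rfl,
    fun a b => (henum (enum b ++ enum a)).choose, ?_,
    fun a => (henum (invWord (enum a))).choose, ?_,
    fun m => wmap_isAut T hTaut (enum m),
    hgen, Nc + 1, Nat.succ_pos Nc, ?_⟩⟩
  · intro a b x
    have hspec := (henum (enum b ++ enum a)).choose_spec
    show wmap T (enum ((henum (enum b ++ enum a)).choose)) x = _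
    rw [hspec, wmap_append]
  · intro a x
    have hspec := (henum (invWord (enum a))).choose_spec
    show wmap T (enum ((henum (invWord (enum a))).choose)) x = _
    rw [hspec, wmap_invWord]
  · intro x s hs
    obtain ⟨t, htc, ht⟩ := hNc x
    have hFx : ∀ a : ℕ, F.rel x (u a x) := fun a => (hgen x (u a x)).mpr ⟨a, E.iseqv.refl _⟩
    have hex : ∀ a : ℕ, ∃ z ∈ t, E.rel (u a x) z := fun a => ht _ (hFx a)
    choose ψ hψt hψE using hex
    have hinj : Set.InjOn ψ ↑s := by
      intro a ha b hb hab
      by_contra hne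
      apply hs a ha b hb hne
      exact E.iseqv.trans (hψE a) (hab ▸ E.iseqv.symm (hψE b))
    have hcard : s.card ≤ t.card := Finset.card_le_card_of_injOn ψ (fun a _ => hψt a) hinj
    omega

end Assembly
end
end Stmt13


open Stmt13 in
/-- for bounded index extensions, normality is equivalent to being
generated by a finite subgroup of `Out_B(E)`. -/
theorem stmt13 {X : Type} [MeasurableSpace X] [StandardBorelSpace X] (E F : CBER X)
    (hEF : E.le F) (hbi : BoundedIndex E F) :
    NormalIn E F ↔ Nonempty (FiniteOuterGen E F) := by
  constructor
  · intro hn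
    obtain ⟨W⟩ := exists_words hn hbi
    refine ⟨⟨↥(GG W.Nb), ⟨W.TEq, W.TEq_isAut, ?_, ?_⟩, ?_⟩⟩
    · intro x
      show E.rel (W.Tmap 1 x) x
      rw [W.Tmap_one]
      exact E.iseqv.refl x
    · intro g h x
      exact W.Tmap_mul g h x
    · intro x y
      exact W.Tgen x y
  · rintro ⟨FOG⟩
    letI := FOG.grp
    letI := FOG.fin
    have hne : Nonempty FOG.G := ⟨1⟩
    obtain ⟨f, hf⟩ := exists_surjective_nat FOG.G
    refine ⟨fun n => FOG.act.T (f n), fun n => FOG.act.aut (f n), ?_⟩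
    intro x y
    constructor
    · intro h
      obtain ⟨g, hg⟩ := (FOG.gen x y).mp h
      obtain ⟨n, rfl⟩ := hf g
      exact Relation.EqvGen.trans _ _ _
        (Relation.EqvGen.rel _ _ (Or.inr ⟨n, rfl⟩))
        (Relation.EqvGen.rel _ _ (Or.inl hg))
    · intro h
      induction h with
      | rel a b hab =>
        rcases hab with hE | ⟨n, rfl⟩
        · exact hEF a b hE
        · exact (FOG.gen a _).mpr ⟨f n, E.iseqv.refl _⟩
      | refl a => exact F.iseqv.refl a
      | symm a b _ IH => exact F.iseqv.symm IH
      | trans a b c _ _ IH1 IH2 => exact F.iseqv.trans IH1 IH2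
end

section
/- Let H be a subgroup of a countable group G. If every outer action of G (on the quotient of any CBER) has a lift, then the same holds for H; likewise with 'lift' replaced by 'class-bijective lift'. -/
open MeasureTheory Set Pointwise

section Stmt14Aux

variable {G : Type} [Group G] [Countable G] (H : Subgroup G)

instance : MeasurableSpace (G ⧸ H) := ⊤

instance : Countable (G ⧸ H) := Quotient.countable

open scoped Classical in
/-- Coset representatives with `sec14 H 1 = 1`. -/
noncomputable def sec14 : G ⧸ H → G :=
  fun c => if c = ((1 : G) : G ⧸ H) then 1 else Quotient.out c

lemma sec14_spec (c : G ⧸ H) : ((sec14 H c : G) : G ⧸ H) = c := by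
  unfold sec14
  split
  · next h => rw [h]
  · exact Quotient.out_eq c

lemma sec14_one : sec14 H ((1 : G) : G ⧸ H) = 1 := by simp [sec14]

lemma mk_mul_smul (g x : G) : ((g * x : G) : G ⧸ H) = g • ((x : G) : G ⧸ H) := by
  rw [MulAction.Quotient.smul_mk]; rfl

/-- The cocycle `σ(g•c)⁻¹ g σ(c) ∈ H`. -/
noncomputable def coc14 (g : G) (c : G ⧸ H) : H :=
  ⟨(sec14 H (g • c))⁻¹ * (g * sec14 H c), by
    rw [← QuotientGroup.eq, sec14_spec, mk_mul_smul, sec14_spec]⟩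

lemma coc14_one (c : G ⧸ H) : coc14 H 1 c = 1 := by
  apply Subtype.ext
  simp only [coc14, one_smul, one_mul, inv_mul_cancel, OneMemClass.coe_one]

lemma coc14_mul (g g' : G) (c : G ⧸ H) :
    coc14 H (g * g') c = coc14 H g (g' • c) * coc14 H g' c := by
  apply Subtype.ext
  simp only [coc14, Submonoid.coe_mul, Subgroup.coe_mul, mul_smul]
  group

lemma smul_one_coset (h : H) : ((h : G)) • ((1 : G) : G ⧸ H) = ((1 : G) : G ⧸ H) := by
  rw [← mk_mul_smul, QuotientGroup.eq]
  simpa using H.inv_mem h.2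

lemma coc14_coe (h : H) : coc14 H (h : G) ((1 : G) : G ⧸ H) = h := by
  apply Subtype.ext
  show (sec14 H ((h : G) • ((1 : G) : G ⧸ H)))⁻¹ * ((h : G) * sec14 H ((1 : G) : G ⧸ H)) = (h : G)
  rw [smul_one_coset H h, sec14_one, mul_one]
  simp

variable {X : Type} [MeasurableSpace X]

/-- The direct sum `⊕_{G/H} E`. -/
def sumCBER (E : CBER X) : CBER (X × (G ⧸ H)) where
  rel p q := p.2 = q.2 ∧ E.rel p.1 q.1
  iseqv := ⟨fun p => ⟨rfl, E.iseqv.refl _⟩,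
    fun h => ⟨h.1.symm, E.iseqv.symm h.2⟩,
    fun h h' => ⟨h.1.trans h'.1, E.iseqv.trans h.2 h'.2⟩⟩
  meas := by
    have h1 : MeasurableSet {p : (X × (G ⧸ H)) × (X × (G ⧸ H)) | p.1.2 = p.2.2} := by
      have hm : Measurable fun p : (X × (G ⧸ H)) × (X × (G ⧸ H)) => (p.1.2, p.2.2) :=
        (measurable_snd.comp measurable_fst).prodMk (measurable_snd.comp measurable_snd)
      have hd : MeasurableSet {q : (G ⧸ H) × (G ⧸ H) | q.1 = q.2} :=
        Set.Countable.measurableSet (Set.Countable.mono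
          (Set.subset_univ _) Set.countable_univ)
      exact hm hd
    have h2 : MeasurableSet {p : (X × (G ⧸ H)) × (X × (G ⧸ H)) | E.rel p.1.1 p.2.1} := by
      have hm : Measurable fun p : (X × (G ⧸ H)) × (X × (G ⧸ H)) => (p.1.1, p.2.1) :=
        (measurable_fst.comp measurable_fst).prodMk (measurable_fst.comp measurable_snd)
      exact hm E.meas
    exact h1.inter h2
  ctble p := by
    have hsub : {q : X × (G ⧸ H) | p.2 = q.2 ∧ E.rel p.1 q.1} ⊆
        {y | E.rel p.1 y} ×ˢ (Set.univ : Set (G ⧸ H)) := fun q hq => ⟨hq.2, trivial⟩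
    exact Set.Countable.mono hsub ((E.ctble p.1).prod Set.countable_univ)

variable {H}

/-- The coinduced automorphisms on `X × G/H`. -/
noncomputable def indEquiv {E : CBER X} (a : OuterAction E H) (g : G) :
    (X × (G ⧸ H)) ≃ (X × (G ⧸ H)) where
  toFun p := (a.T (coc14 H g p.2) p.1, g • p.2)
  invFun p := ((a.T (coc14 H g (g⁻¹ • p.2))).symm p.1, g⁻¹ • p.2)
  left_inv p := by
    obtain ⟨y, c⟩ := p
    simp [inv_smul_smul]
  right_inv p := by
    obtain ⟨y, c⟩ := p
    simp [smul_inv_smul]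

/-- The coinduced outer action of `G`. -/
noncomputable def indAct {E : CBER X} (a : OuterAction E H) :
    OuterAction (sumCBER H E) G where
  T := indEquiv a
  aut g := by
    refine ⟨?_, ?_, ?_⟩
    · show Measurable fun p : X × (G ⧸ H) =>
        ((a.T (coc14 H g p.2) p.1, g • p.2) : X × (G ⧸ H))
      apply measurable_from_prod_countable_left
      intro c
      show Measurable fun x : X => ((a.T (coc14 H g c) x, g • c) : X × (G ⧸ H))
      exact ((a.aut (coc14 H g c)).1).prodMk measurable_const
    · show Measurable fun p : X × (G ⧸ H) =>
        (((a.T (coc14 H g (g⁻¹ • p.2))).symm p.1, g⁻¹ • p.2) : X × (G ⧸ H))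
      apply measurable_from_prod_countable_left
      intro c
      show Measurable fun x : X =>
        (((a.T (coc14 H g (g⁻¹ • c))).symm x, g⁻¹ • c) : X × (G ⧸ H))
      exact ((a.aut (coc14 H g (g⁻¹ • c))).2.1).prodMk measurable_const
    · rintro ⟨y, c⟩ ⟨y', c'⟩
      constructor
      · rintro ⟨h1, h2⟩
        have hc : c = c' := smul_left_cancel g h1
        subst hc
        exact ⟨rfl, ((a.aut _).2.2 _ _).mp h2⟩
      · rintro ⟨h1, h2⟩
        have hc : c = c' := h1
        subst hc
        exact ⟨rfl, ((a.aut _).2.2 _ _).mpr h2⟩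
  one := by
    rintro ⟨y, c⟩
    refine ⟨one_smul _ _, ?_⟩
    show E.rel (a.T (coc14 H 1 c) y) y
    rw [coc14_one]
    exact a.one y
  mul := by
    rintro g g' ⟨y, c⟩
    refine ⟨mul_smul g g' c, ?_⟩
    show E.rel (a.T (coc14 H (g * g') c) y) (a.T (coc14 H g (g' • c)) (a.T (coc14 H g' c) y))
    rw [coc14_mul]
    exact a.mul _ _ y

lemma indLift_snd {E : CBER X} {a : OuterAction E H} (B : OuterLift (indAct a))
    (g : G) (p : X × (G ⧸ H)) : (B.b g p).2 = g • p.2 :=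
  (B.lifts g p).1

lemma indLift_slice {E : CBER X} {a : OuterAction E H} (B : OuterLift (indAct a))
    (h : H) (y : X) :
    B.b (h : G) (y, ((1 : G) : G ⧸ H)) =
      ((B.b (h : G) (y, ((1 : G) : G ⧸ H))).1, ((1 : G) : G ⧸ H)) := by
  ext
  · rfl
  · rw [indLift_snd]
    exact smul_one_coset H h

/-- Pulling back a lift of the coinduced action to a lift for `H`. -/
noncomputable def pullLift {E : CBER X} {a : OuterAction E H}
    (B : OuterLift (indAct a)) : OuterLift a where
  b h := { toFun := fun y => (B.b (h : G) (y, ((1 : G) : G ⧸ H))).1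
           invFun := fun y => (B.b ((h⁻¹ : H) : G) (y, ((1 : G) : G ⧸ H))).1
           left_inv := by
             intro y
             show (B.b ((h⁻¹ : H) : G)
               ((B.b (h : G) (y, ((1 : G) : G ⧸ H))).1, ((1 : G) : G ⧸ H))).1 = y
             rw [← indLift_slice, ← B.mul]
             simp [B.one]
           right_inv := by
             intro y
             show (B.b (h : G)
               ((B.b ((h⁻¹ : H) : G) (y, ((1 : G) : G ⧸ H))).1, ((1 : G) : G ⧸ H))).1 = y
             rw [← indLift_slice, ← B.mul]
             simp [B.one] }
  aut h := by
    refine ⟨?_, ?_, ?_⟩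
    · have m1 : Measurable fun y : X => ((y, ((1 : G) : G ⧸ H)) : X × (G ⧸ H)) :=
        measurable_id.prodMk measurable_const
      exact measurable_fst.comp (((B.aut ((h : G))).1).comp m1)
    · have m1 : Measurable fun y : X => ((y, ((1 : G) : G ⧸ H)) : X × (G ⧸ H)) :=
        measurable_id.prodMk measurable_const
      exact measurable_fst.comp (((B.aut (((h⁻¹ : H) : G))).1).comp m1)
    · intro x y
      show E.rel (B.b (h : G) (x, ((1 : G) : G ⧸ H))).1
        (B.b (h : G) (y, ((1 : G) : G ⧸ H))).1 ↔ E.rel x y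
      constructor
      · intro hr
        have : (sumCBER H E).rel (B.b (h : G) (x, ((1 : G) : G ⧸ H)))
            (B.b (h : G) (y, ((1 : G) : G ⧸ H))) := by
          refine ⟨?_, hr⟩
          rw [indLift_snd, indLift_snd]
        exact (((B.aut _).2.2 _ _).mp this).2
      · intro hr
        have : (sumCBER H E).rel ((x, ((1 : G) : G ⧸ H)) : X × (G ⧸ H))
            (y, ((1 : G) : G ⧸ H)) := ⟨rfl, hr⟩
        exact (((B.aut _).2.2 _ _).mpr this).2
  one := by
    intro y
    show (B.b ((1 : H) : G) (y, ((1 : G) : G ⧸ H))).1 = y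
    have h1 : ((1 : H) : G) = (1 : G) := rfl
    rw [h1, B.one]
  mul := by
    intro g h y
    show (B.b ((g * h : H) : G) (y, ((1 : G) : G ⧸ H))).1 =
      (B.b (g : G) ((B.b (h : G) (y, ((1 : G) : G ⧸ H))).1, ((1 : G) : G ⧸ H))).1
    rw [← indLift_slice, ← B.mul]
    rfl
  lifts := by
    intro h y
    have := (B.lifts (h : G) (y, ((1 : G) : G ⧸ H))).2
    show E.rel (B.b (h : G) (y, ((1 : G) : G ⧸ H))).1 (a.T h y)
    have hT : (indAct a).T (h : G) (y, ((1 : G) : G ⧸ H)) =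
        (a.T (coc14 H (h : G) ((1 : G) : G ⧸ H)) y, (h : G) • ((1 : G) : G ⧸ H)) := rfl
    rw [hT] at this
    simpa [coc14_coe] using this

lemma pullLift_cb {E : CBER X} {a : OuterAction E H}
    (B : OuterLift (indAct a)) (hB : B.ClassBijective) :
    (pullLift B).ClassBijective := by
  intro h y hr
  show (B.b (h : G) (y, ((1 : G) : G ⧸ H))).1 = y
  have h2 : (sumCBER H E).rel (B.b (h : G) (y, ((1 : G) : G ⧸ H)))
      ((y, ((1 : G) : G ⧸ H)) : X × (G ⧸ H)) := by
    refine ⟨?_, hr⟩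
    rw [indLift_snd]
    exact smul_one_coset H h
  have := hB (h : G) (y, ((1 : G) : G ⧸ H)) h2
  rw [this]

end Stmt14Aux

/-- the classes of groups all of whose outer actions have a lift
(resp. a class-bijective lift) are closed under subgroups. -/
theorem stmt14 {G : Type} [Group G] [Countable G] (H : Subgroup G) :
    ((∀ (Y : Type) [MeasurableSpace Y] [StandardBorelSpace Y] (E : CBER Y)
        (a : OuterAction E G), Nonempty (OuterLift a)) →
      ∀ (Y : Type) [MeasurableSpace Y] [StandardBorelSpace Y] (E : CBER Y)
        (a : OuterAction E H), Nonempty (OuterLift a)) ∧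
    ((∀ (Y : Type) [MeasurableSpace Y] [StandardBorelSpace Y] (E : CBER Y)
        (a : OuterAction E G), ∃ l : OuterLift a, l.ClassBijective) →
      ∀ (Y : Type) [MeasurableSpace Y] [StandardBorelSpace Y] (E : CBER Y)
        (a : OuterAction E H), ∃ l : OuterLift a, l.ClassBijective) := by
  constructor
  · intro hyp Y _ _ E a
    obtain ⟨B⟩ := hyp (Y × (G ⧸ H)) (sumCBER H E) (indAct a)
    exact ⟨pullLift B⟩
  · intro hyp Y _ _ E a
    obtain ⟨B, hB⟩ := hyp (Y × (G ⧸ H)) (sumCBER H E) (indAct a)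
    exact ⟨pullLift B, pullLift_cb B hB⟩
end

section
/- Let G → H be a surjective homomorphism of countable groups. If every outer action of G has a class-bijective lift, then every outer action of H has a class-bijective lift. -/
open MeasureTheory Set Pointwise

/-- the class of groups all of whose outer actions have a
class-bijective lift is closed under quotients. -/
theorem stmt15 {G H : Type} [Group G] [Group H] [Countable G] [Countable H]
    (φ : G →* H) (hφ : Function.Surjective φ)
    (hG : ∀ (Y : Type) [MeasurableSpace Y] [StandardBorelSpace Y] (E : CBER Y)
      (a : OuterAction E G), ∃ l : OuterLift a, l.ClassBijective) :
    ∀ (Y : Type) [MeasurableSpace Y] [StandardBorelSpace Y] (E : CBER Y)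
      (a : OuterAction E H), ∃ l : OuterLift a, l.ClassBijective := by
  intro Y _ _ E a
  let aG : OuterAction E G :=
    { T := fun g => a.T (φ g)
      aut := fun g => a.aut (φ g)
      one := fun x => by simpa using a.one x
      mul := fun g h x => by simpa using a.mul (φ g) (φ h) x }
  obtain ⟨l, hl⟩ := hG Y E aG
  choose s hs using hφ
  have hker : ∀ g : G, φ g = 1 → ∀ x, l.b g x = x := by
    intro g hg x
    apply hl
    refine E.iseqv.trans (l.lifts g x) ?_
    show E.rel (a.T (φ g) x) x
    rw [hg]; exact a.one x
  refine ⟨{ b := fun h => l.b (s h)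
            aut := fun h => l.aut (s h)
            one := fun x => hker (s 1) (hs 1) x
            mul := ?_
            lifts := ?_ }, fun h x hx => hl (s h) x hx⟩
  · intro h h' x
    have hk : φ (s (h * h') * (s h * s h')⁻¹) = 1 := by rw [map_mul, map_inv, map_mul, hs, hs, hs, mul_inv_cancel]
    calc l.b (s (h * h')) x
        = l.b ((s (h * h') * (s h * s h')⁻¹) * (s h * s h')) x := by group
      _ = l.b (s (h * h') * (s h * s h')⁻¹) (l.b (s h * s h') x) := l.mul _ _ _
      _ = l.b (s h * s h') x := hker _ hk _
      _ = l.b (s h) (l.b (s h') x) := l.mul _ _ _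
  · intro h x
    have := l.lifts (s h) x
    show E.rel (l.b (s h) x) (a.T h x)
    rwa [show a.T h x = aG.T (s h) x by simp [aG, hs]]
end

section
/- Let E be an aperiodic CBER on X, let A, B be Borel sets, and suppose nÃ = X̃ = nB̃ in the cardinal algebra of E-equidecomposability classes of E × I_ℕ, for some 0 < n < ∞. Then à = B̃; that is, there is a Borel bijection T : A → B with graph contained in E (after passing to E × I_ℕ, equivalently an element of Inn_B(E × I_ℕ) carrying A × ℕ to B × ℕ). -/
open MeasureTheory Set Pointwise

section Stmt18Aux

/-- Gluing bijections onto the pieces of a partition gives a bijection from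
`α × ι` onto the whole space. -/
private lemma stmt18_glue_bijective {α β ι : Type}
    (P : ι → Set β) (hdisj : Pairwise (Function.onFun Disjoint P))
    (hunion : (⋃ i, P i) = Set.univ)
    (f : ∀ i, α ≃ P i) :
    Function.Bijective (fun p : α × ι => ((f p.2 p.1 : β))) := by
  constructor
  · rintro ⟨a, i⟩ ⟨b, j⟩ h
    dsimp only at h
    have hij : i = j := by
      by_contra hne
      have h1 : ((f i a : β)) ∈ P i := (f i a).2
      have h2 : ((f i a : β)) ∈ P j := by rw [h]; exact (f j b).2
      exact Set.disjoint_left.1 (hdisj hne) h1 h2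
    subst hij
    have hab : f i a = f i b := Subtype.ext h
    exact Prod.ext ((f i).injective hab) rfl
  · intro y
    have hy : y ∈ ⋃ i, P i := hunion ▸ Set.mem_univ y
    obtain ⟨i, hi⟩ := Set.mem_iUnion.1 hy
    exact ⟨((f i).symm ⟨y, hi⟩, i), by simp⟩

/-- The main construction: if `X × ℕ` is partitioned into `n` Borel pieces each
`E × I_ℕ`-equidecomposable with `A × ℕ`, then there is a Borel bijection
`A × ℕ → X × ℕ` whose graph respects `E` on first coordinates. -/
private lemma stmt18_big {X : Type} [MeasurableSpace X] (E : CBER X) {A : Set X}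
    {n : ℕ} (e : ℕ ≃ ℕ × Fin n) (P : Fin n → Set (X × ℕ))
    (hdisj : Pairwise (Function.onFun Disjoint P))
    (hunion : (⋃ i, P i) = Set.univ)
    (heq : ∀ i, Equidec (E.prodFull ℕ) (A ×ˢ (Set.univ : Set ℕ)) (P i)) :
    ∃ g : (A ×ˢ (Set.univ : Set ℕ) : Set (X × ℕ)) → X × ℕ,
      Function.Bijective g ∧ Measurable g ∧
      ∀ x, E.rel x.1.1 (g x).1 := by
  classical
  choose f hf₁ _hf₂ hf₃ using heq
  have memw : ∀ (x : (A ×ˢ (Set.univ : Set ℕ) : Set (X × ℕ))) (m : ℕ),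
      ((x : X × ℕ).1, m) ∈ A ×ˢ (Set.univ : Set ℕ) := fun x m =>
    Set.mem_prod.2 ⟨(Set.mem_prod.1 x.2).1, trivial⟩
  -- the splitting equivalence `A × ℕ ≃ (A × ℕ) × Fin n` via the pairing `e`
  let split : (A ×ˢ (Set.univ : Set ℕ) : Set (X × ℕ)) ≃
      (A ×ˢ (Set.univ : Set ℕ) : Set (X × ℕ)) × Fin n :=
  { toFun := fun x => (⟨((x : X × ℕ).1, (e (x : X × ℕ).2).1), memw x _⟩,
      (e (x : X × ℕ).2).2)
    invFun := fun p => ⟨((p.1 : X × ℕ).1, e.symm ((p.1 : X × ℕ).2, p.2)), memw p.1 _⟩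
    left_inv := by
      intro x
      apply Subtype.ext
      simp
    right_inv := by
      rintro ⟨x, i⟩
      refine Prod.ext (Subtype.ext ?_) ?_ <;> simp }
  refine ⟨(fun p : _ × Fin n => ((f p.2 p.1 : X × ℕ))) ∘ split, ?_, ?_, ?_⟩
  · exact (stmt18_glue_bijective P hdisj hunion f).comp split.bijective
  · have hsplit : Measurable fun x : (A ×ˢ (Set.univ : Set ℕ) : Set (X × ℕ)) =>
        (split x : (A ×ˢ (Set.univ : Set ℕ) : Set (X × ℕ)) × Fin n) := by
      refine Measurable.prodMk (Measurable.subtype_mk ?_) ?_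
      · exact (measurable_fst.comp measurable_subtype_coe).prodMk
          ((Measurable.of_discrete (f := fun k : ℕ => (e k).1)).comp
            (measurable_snd.comp measurable_subtype_coe))
      · exact (Measurable.of_discrete (f := fun k : ℕ => (e k).2)).comp
          (measurable_snd.comp measurable_subtype_coe)
    exact (measurable_from_prod_countable_left fun i => hf₁ i).comp hsplit
  · intro x
    exact hf₃ (e x.1.2).2 ⟨(x.1.1, (e x.1.2).1), memw x _⟩

end Stmt18Aux

/-- cancellation in the cardinal algebra `𝒦(E × I_ℕ)`:
if `n·Ã = X̃ = n·B̃` then `Ã = B̃`. -/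
theorem stmt18 {X : Type} [MeasurableSpace X] [StandardBorelSpace X] (E : CBER X)
    (hE : E.Aperiodic) (A B : Set X) (hA : MeasurableSet A) (hB : MeasurableSet B)
    (n : ℕ) (hn : 0 < n)
    (hPA : ∃ P : Fin n → Set (X × ℕ), (∀ i, MeasurableSet (P i)) ∧
      Pairwise (Function.onFun Disjoint P) ∧ (⋃ i, P i) = Set.univ ∧
      ∀ i, Equidec (E.prodFull ℕ) (A ×ˢ (Set.univ : Set ℕ)) (P i))
    (hPB : ∃ P : Fin n → Set (X × ℕ), (∀ i, MeasurableSet (P i)) ∧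
      Pairwise (Function.onFun Disjoint P) ∧ (⋃ i, P i) = Set.univ ∧
      ∀ i, Equidec (E.prodFull ℕ) (B ×ˢ (Set.univ : Set ℕ)) (P i)) :
    Equidec (E.prodFull ℕ) (A ×ˢ (Set.univ : Set ℕ)) (B ×ˢ (Set.univ : Set ℕ)) := by
  classical
  obtain ⟨PA, _hPAm, hPAd, hPAu, hPAe⟩ := hPA
  obtain ⟨PB, _hPBm, hPBd, hPBu, hPBe⟩ := hPB
  haveI : NeZero n := ⟨hn.ne'⟩
  letI := Denumerable.ofEncodableOfInfinite (ℕ × Fin n)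
  let e : ℕ ≃ ℕ × Fin n := (Denumerable.eqv (ℕ × Fin n)).symm
  obtain ⟨gA, hbA, hmA, hrA⟩ := stmt18_big E e PA hPAd hPAu hPAe
  obtain ⟨gB, hbB, hmB, hrB⟩ := stmt18_big E e PB hPBd hPBu hPBe
  haveI : StandardBorelSpace (↥(A ×ˢ (Set.univ : Set ℕ))) :=
    (hA.prod MeasurableSet.univ).standardBorel
  haveI : StandardBorelSpace (↥(B ×ˢ (Set.univ : Set ℕ))) :=
    (hB.prod MeasurableSet.univ).standardBorel
  let eqA := Equiv.ofBijective gA hbA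
  let eqB := Equiv.ofBijective gB hbB
  have hinvB : Measurable fun y : X × ℕ => ((eqB.symm y : _) : X × ℕ) := by
    have emb : MeasurableEmbedding gB := hmB.measurableEmbedding hbB.injective
    intro T hT
    have hpre : (fun y : X × ℕ => ((eqB.symm y : _) : X × ℕ)) ⁻¹' T
        = gB '' (Subtype.val ⁻¹' T) := by
      ext y
      simp only [Set.mem_preimage, Set.mem_image]
      constructor
      · intro h; exact ⟨eqB.symm y, h, eqB.apply_symm_apply y⟩
      · rintro ⟨b, hb, rfl⟩
        rw [show gB b = eqB b from rfl, eqB.symm_apply_apply]; exact hb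
    rw [hpre]
    exact emb.measurableSet_image' (measurable_subtype_coe hT)
  have hinvA : Measurable fun y : X × ℕ => ((eqA.symm y : _) : X × ℕ) := by
    have emb : MeasurableEmbedding gA := hmA.measurableEmbedding hbA.injective
    intro T hT
    have hpre : (fun y : X × ℕ => ((eqA.symm y : _) : X × ℕ)) ⁻¹' T
        = gA '' (Subtype.val ⁻¹' T) := by
      ext y
      simp only [Set.mem_preimage, Set.mem_image]
      constructor
      · intro h; exact ⟨eqA.symm y, h, eqA.apply_symm_apply y⟩
      · rintro ⟨b, hb, rfl⟩
        rw [show gA b = eqA b from rfl, eqA.symm_apply_apply]; exact hb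
    rw [hpre]
    exact emb.measurableSet_image' (measurable_subtype_coe hT)
  refine ⟨eqA.trans eqB.symm, ?_, ?_, ?_⟩
  · exact hinvB.comp hmA
  · exact hinvA.comp hmB
  · intro a
    have h1 : E.rel a.1.1 (gA a).1 := hrA a
    have h2 : E.rel (eqB.symm (gA a)).1.1 (gB (eqB.symm (gA a))).1 :=
      hrB _
    have h3 : gB (eqB.symm (gA a)) = gA a := eqB.apply_symm_apply (gA a)
    rw [h3] at h2
    exact E.iseqv.trans h1 (E.iseqv.symm h2)
end
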